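/- arXiv:2307.05094 — 3 statements merged into one kernel-verified Lean document; each statement's English description precedes it below -/
import Mathlib

section
/- Let O be a total order on M_S, B = (B_i) a leveled monomial basis of S, and I a homogeneous ideal of S. The following are equivalent: (1) IMV(I) is an ideal of S; (2) IMV(I) = IMI(I); (3) Hilb_I = Hilb_{IMV(I)} = Hilb_{IMI(I)}. -/
open MvPolynomial

set_option synthInstance.maxHeartbeats 1000000
set_option maxHeartbeats 1000000

section OrderDefs

variable {α : Type*}

/-- The set of the `k` `Ole`-smallest elements of `L`. -/
def kSmallest (Ole : α → α → Prop) (L : Set α) (k : ℕ) : Set α :=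
  {a ∈ L | ({b ∈ L | Ole b a}).ncard ≤ k}

/-- The set of the `k` `Ole`-largest elements of `L`. -/
def kLargest (Ole : α → α → Prop) (L : Set α) (k : ℕ) : Set α :=
  {a ∈ L | ({b ∈ L | Ole a b}).ncard ≤ k}

/-- `Ole` is a linear (total) order on the set `T`. -/
def IsLinOrderOn (Ole : α → α → Prop) (T : Set α) : Prop :=
  (∀ a ∈ T, Ole a a) ∧
  (∀ a ∈ T, ∀ b ∈ T, Ole a b → Ole b a → a = b) ∧
  (∀ a ∈ T, ∀ b ∈ T, ∀ c ∈ T, Ole a b → Ole b c → Ole a c) ∧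
  (∀ a ∈ T, ∀ b ∈ T, Ole a b ∨ Ole b a)

end OrderDefs

section RingDefs

variable {K : Type*} [Field K] {σ : Type*}

/-- The set of monomials of `S = R/H`: nonzero residues of monomials of `R`. -/
def monoSet (H : Ideal (MvPolynomial σ K)) : Set (MvPolynomial σ K ⧸ H) :=
  {m | m ≠ 0 ∧ ∃ p : σ →₀ ℕ, m = Ideal.Quotient.mk H (monomial p (1 : K))}

/-- Monomial division in `S`: `f ∣ g` iff `g = a * f` for some monomial `a` of `S`. -/
def mdvd (H : Ideal (MvPolynomial σ K)) (f g : MvPolynomial σ K ⧸ H) : Prop :=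
  ∃ a ∈ monoSet H, g = a * f

/-- `m` is the residue of a monomial of degree `i`. -/
def hasDeg (H : Ideal (MvPolynomial σ K)) (m : MvPolynomial σ K ⧸ H) (i : ℕ) : Prop :=
  ∃ p : σ →₀ ℕ, (p.sum fun _ e => e) = i ∧ m = Ideal.Quotient.mk H (monomial p (1 : K))

/-- The `i`-th level of the poset of monomials of `S`. -/
def lvlMono (H : Ideal (MvPolynomial σ K)) (i : ℕ) : Set (MvPolynomial σ K ⧸ H) :=
  {m | m ∈ monoSet H ∧ hasDeg H m i}

/-- `b` covers `a` in the poset of monomials of `S`. -/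
def coversRel (H : Ideal (MvPolynomial σ K)) (a b : MvPolynomial σ K ⧸ H) : Prop :=
  a ∈ monoSet H ∧ b ∈ monoSet H ∧ a ≠ b ∧ mdvd H a b ∧
    ¬∃ c, c ∈ monoSet H ∧ c ≠ a ∧ c ≠ b ∧ mdvd H a c ∧ mdvd H c b

/-- The upper shadow of `A`: all elements covering some element of `A`. -/
def upShadow (H : Ideal (MvPolynomial σ K)) (A : Set (MvPolynomial σ K ⧸ H)) :
    Set (MvPolynomial σ K ⧸ H) :=
  {b | ∃ a ∈ A, coversRel H a b}

/-- The lower shadow of `A`: all elements covered by some element of `A`. -/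
def lowShadow (H : Ideal (MvPolynomial σ K)) (A : Set (MvPolynomial σ K ⧸ H)) :
    Set (MvPolynomial σ K ⧸ H) :=
  {b | ∃ a ∈ A, coversRel H b a}

/-- `H` is a homogeneous ideal of the polynomial ring: generated by homogeneous elements. -/
def IsHomogPolyIdeal (H : Ideal (MvPolynomial σ K)) : Prop :=
  ∃ T : Set (MvPolynomial σ K), H = Ideal.span T ∧ ∀ t ∈ T, ∃ i : ℕ, t.IsHomogeneous i

/-- The degree-`i` component `S_i` of `S = R/H`, as a `K`-subspace. -/
noncomputable def gradedPiece (H : Ideal (MvPolynomial σ K)) (i : ℕ) :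
    Submodule K (MvPolynomial σ K ⧸ H) :=
  Submodule.map (Ideal.Quotient.mkₐ K H).toLinearMap (homogeneousSubmodule σ K i)

/-- A homogeneous ideal of `S`: generated by homogeneous elements. -/
def IsHomogIdealS (H : Ideal (MvPolynomial σ K)) (I : Ideal (MvPolynomial σ K ⧸ H)) : Prop :=
  ∃ T : Set (MvPolynomial σ K ⧸ H), I = Ideal.span T ∧ ∀ t ∈ T, ∃ i : ℕ, t ∈ gradedPiece H i

/-- `S` is level linearly independent: each level of the poset of monomials is
`K`-linearly independent. -/
def LevelLinIndep (H : Ideal (MvPolynomial σ K)) : Prop :=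
  ∀ i : ℕ, LinearIndependent K (fun m : ↥(lvlMono H i) => (m : MvPolynomial σ K ⧸ H))

/-- The Hilbert function of a homogeneous ideal `I` of `S`. -/
noncomputable def hilbI (H : Ideal (MvPolynomial σ K)) (I : Ideal (MvPolynomial σ K ⧸ H))
    (i : ℕ) : ℕ :=
  Module.finrank K ↥(Submodule.restrictScalars K I ⊓ gradedPiece H i)

/-- A `K`-subspace of `S` is (the carrier of) an ideal of `S`. -/
def IsIdealCarrier (H : Ideal (MvPolynomial σ K))
    (W : Submodule K (MvPolynomial σ K ⧸ H)) : Prop :=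
  ∃ J : Ideal (MvPolynomial σ K ⧸ H), Submodule.restrictScalars K J = W

/-- `Ole` is a monomial order on the monomials of `S`. -/
def IsMonomialOrder (H : Ideal (MvPolynomial σ K))
    (Ole : (MvPolynomial σ K ⧸ H) → (MvPolynomial σ K ⧸ H) → Prop) : Prop :=
  IsLinOrderOn Ole (monoSet H) ∧
  ∀ m m₁ m₂ : MvPolynomial σ K ⧸ H, m ∈ monoSet H → m₁ ∈ monoSet H → m₂ ∈ monoSet H →
    Ole m₁ m₂ → m₁ ≠ m₂ → m * m₁ ≠ 0 → m * m₂ ≠ 0 →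
    Ole (m * m₁) (m * m₂) ∧ m * m₁ ≠ m * m₂

/-- Degree-`i` part of the initial `Ole`-segment space `O*[I]`: the span of the
`dim_K (I ∩ S_i)` `Ole`-smallest degree-`i` monomials. -/
noncomputable def oSegLvl (H : Ideal (MvPolynomial σ K))
    (Ole : (MvPolynomial σ K ⧸ H) → (MvPolynomial σ K ⧸ H) → Prop)
    (I : Ideal (MvPolynomial σ K ⧸ H)) (i : ℕ) : Submodule K (MvPolynomial σ K ⧸ H) :=
  Submodule.span K (kSmallest Ole (lvlMono H i) (hilbI H I i))

/-- `(S, Ole)` is a Macaulay ring. -/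
def MacaulayRing (H : Ideal (MvPolynomial σ K))
    (Ole : (MvPolynomial σ K ⧸ H) → (MvPolynomial σ K ⧸ H) → Prop) : Prop :=
  ∀ I : Ideal (MvPolynomial σ K ⧸ H), IsHomogIdealS H I →
    IsIdealCarrier H (⨆ i : ℕ, oSegLvl H Ole I i) ∧
    ∀ i : ℕ, hilbI H I i = Module.finrank K ↥(oSegLvl H Ole I i)

/-- `(𝓜_S, Ole)` is a Macaulay poset. -/
def MacaulayMonoPoset (H : Ideal (MvPolynomial σ K))
    (Ole : (MvPolynomial σ K ⧸ H) → (MvPolynomial σ K ⧸ H) → Prop) : Prop :=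
  ∀ i : ℕ, 1 ≤ i → ∀ A ⊆ lvlMono H i,
    lowShadow H (kSmallest Ole (lvlMono H i) A.ncard) ⊆
      kSmallest Ole (lvlMono H (i - 1)) ((lowShadow H A).ncard)

/-- A leveled monomial basis of `S`. -/
def IsLeveledBasis (H : Ideal (MvPolynomial σ K))
    (B : ℕ → Set (MvPolynomial σ K ⧸ H)) : Prop :=
  ∀ i : ℕ, B i ⊆ monoSet H ∧
    LinearIndependent K (fun b : ↥(B i) => (b : MvPolynomial σ K ⧸ H)) ∧
    Submodule.span K (B i) = gradedPiece H i

/-- `m` is the initial monomial of the nonzero homogeneous `f ∈ S_i` with respect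
to the order `Ole` and the basis `B i`: `m ∈ B i`, and writing `f` in the basis `B i`,
the coefficient of `m` is nonzero while all coefficients of `Ole`-smaller basis elements
vanish. -/
def IsIM (H : Ideal (MvPolynomial σ K))
    (Ole : (MvPolynomial σ K ⧸ H) → (MvPolynomial σ K ⧸ H) → Prop)
    (B : ℕ → Set (MvPolynomial σ K ⧸ H)) (i : ℕ) (f m : MvPolynomial σ K ⧸ H) : Prop :=
  m ∈ B i ∧ f ∈ Submodule.span K {b ∈ B i | Ole m b} ∧
    f ∉ Submodule.span K {b ∈ B i | Ole m b ∧ b ≠ m}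

/-- The degree-`i` initial monomial set of a homogeneous ideal `I`. -/
def IMS (H : Ideal (MvPolynomial σ K))
    (Ole : (MvPolynomial σ K ⧸ H) → (MvPolynomial σ K ⧸ H) → Prop)
    (B : ℕ → Set (MvPolynomial σ K ⧸ H)) (I : Ideal (MvPolynomial σ K ⧸ H)) (i : ℕ) :
    Set (MvPolynomial σ K ⧸ H) :=
  {m | ∃ f, f ∈ I ∧ f ∈ gradedPiece H i ∧ f ≠ 0 ∧ IsIM H Ole B i f m}

/-- The degree-`i` component of the initial monomial vector space `IMV(I)`. -/
noncomputable def IMVlvl (H : Ideal (MvPolynomial σ K))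
    (Ole : (MvPolynomial σ K ⧸ H) → (MvPolynomial σ K ⧸ H) → Prop)
    (B : ℕ → Set (MvPolynomial σ K ⧸ H)) (I : Ideal (MvPolynomial σ K ⧸ H)) (i : ℕ) :
    Submodule K (MvPolynomial σ K ⧸ H) :=
  Submodule.span K (IMS H Ole B I i)

/-- The initial monomial ideal `IMI(I)`. -/
noncomputable def IMI (H : Ideal (MvPolynomial σ K))
    (Ole : (MvPolynomial σ K ⧸ H) → (MvPolynomial σ K ⧸ H) → Prop)
    (B : ℕ → Set (MvPolynomial σ K ⧸ H)) (I : Ideal (MvPolynomial σ K ⧸ H)) :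
    Ideal (MvPolynomial σ K ⧸ H) :=
  Ideal.span (⋃ i : ℕ, IMS H Ole B I i)

end RingDefs


section Helpers

variable {K : Type*} [Field K] {σ : Type*} {α : Type*}

noncomputable instance : GradedAlgebra (homogeneousSubmodule σ K) := MvPolynomial.gradedAlgebra

theorem exists_ole_min (Ole : α → α → Prop) {T : Set α} (hO : IsLinOrderOn Ole T)
    {s : Set α} (hfin : s.Finite) :
    s.Nonempty → s ⊆ T → ∃ m ∈ s, ∀ b ∈ s, Ole m b := by
  obtain ⟨hrefl, hanti, htrans, htot⟩ := hO
  classical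
  refine Set.Finite.induction_on (motive := fun s _ => s.Nonempty → s ⊆ T → ∃ m ∈ s, ∀ b ∈ s, Ole m b)
    s hfin (fun hne _ => absurd hne (by simp)) ?_
  intro a t hat htfin ih hne hsT
  rcases t.eq_empty_or_nonempty with rfl | htne
  · refine ⟨a, Set.mem_insert _ _, ?_⟩
    rintro b hb
    rcases hb with rfl | hb
    · exact hrefl _ (hsT (Set.mem_insert _ _))
    · exact absurd hb (by simp)
  · have htT : t ⊆ T := fun x hx => hsT (Set.mem_insert_of_mem _ hx)
    obtain ⟨m, hmt, hmin⟩ := ih htne htT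
    have haT : a ∈ T := hsT (Set.mem_insert _ _)
    have hmT : m ∈ T := htT hmt
    rcases htot a haT m hmT with h | h
    · refine ⟨a, Set.mem_insert _ _, ?_⟩
      rintro b hb
      rcases hb with rfl | hb
      · exact hrefl _ (hsT (Set.mem_insert _ _))
      · exact htrans a haT m hmT b (htT hb) h (hmin b hb)
    · refine ⟨m, Set.mem_insert_of_mem _ hmt, ?_⟩
      rintro b hb
      rcases hb with rfl | hb
      · exact h
      · exact hmin b hb

theorem exists_smul_sub_mem_span {M : Type*} [AddCommGroup M] [Module K M]
    (s : Set M) (m : M) {f x : M}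
    (hf : f ∈ Submodule.span K s) (hf' : f ∉ Submodule.span K (s \ {m}))
    (hx : x ∈ Submodule.span K s) :
    ∃ c : K, x - c • f ∈ Submodule.span K (s \ {m}) := by
  set W := Submodule.span K (s \ {m}) with hW
  set q := W.mkQ with hq
  have hmem : ∀ y ∈ Submodule.span K s, q y ∈ Submodule.span K {q m} := by
    intro y hy
    have h1 : q y ∈ Submodule.map q (Submodule.span K s) := Submodule.mem_map_of_mem hy
    rw [Submodule.map_span] at h1
    refine Submodule.span_le.mpr ?_ h1
    rintro z ⟨b, hb, rfl⟩
    by_cases hbm : b = m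
    · subst hbm; exact Submodule.mem_span_singleton_self _
    · have hbW : b ∈ W := Submodule.subset_span ⟨hb, hbm⟩
      have : q b = 0 := by
        rw [hq, Submodule.mkQ_apply, Submodule.Quotient.mk_eq_zero]; exact hbW
      rw [this]; exact Submodule.zero_mem _
  obtain ⟨a, ha⟩ := Submodule.mem_span_singleton.mp (hmem x hx)
  obtain ⟨c₀, hc₀⟩ := Submodule.mem_span_singleton.mp (hmem f hf)
  have hc₀0 : c₀ ≠ 0 := by
    rintro rfl
    apply hf'
    have hqf : q f = 0 := by rw [← hc₀, zero_smul]
    rw [hq, Submodule.mkQ_apply, Submodule.Quotient.mk_eq_zero] at hqf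
    exact hqf
  refine ⟨c₀⁻¹ * a, ?_⟩
  have hcalc : q (x - (c₀⁻¹ * a) • f) = 0 := by
    rw [map_sub, map_smul, ← ha, ← hc₀, smul_smul]
    rw [show c₀⁻¹ * a * c₀ = a by field_simp]
    exact sub_self _
  rw [hq, Submodule.mkQ_apply, Submodule.Quotient.mk_eq_zero] at hcalc
  exact hcalc

theorem finrank_sup_span_singleton {M : Type*} [AddCommGroup M] [Module K M]
    (A : Submodule K M) [FiniteDimensional K A] {f : M} (hf : f ∉ A) :
    Module.finrank K ↥(A ⊔ Submodule.span K {f}) = Module.finrank K ↥A + 1 := by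
  have hf0 : f ≠ 0 := by rintro rfl; exact hf A.zero_mem
  have hinf : A ⊓ Submodule.span K {f} = ⊥ := by
    rw [eq_bot_iff]
    rintro y ⟨hyA, hyf⟩
    obtain ⟨c, rfl⟩ := Submodule.mem_span_singleton.mp hyf
    rcases eq_or_ne c 0 with rfl | hc
    · simp
    · exfalso
      apply hf
      have h2 : c⁻¹ • c • f ∈ A := A.smul_mem c⁻¹ hyA
      rwa [smul_smul, inv_mul_cancel₀ hc, one_smul] at h2
  have := Submodule.finrank_sup_add_finrank_inf_eq A (Submodule.span K {f})
  rw [hinf, finrank_bot, finrank_span_singleton hf0] at this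
  omega

theorem iSup_inf_piece {M : Type*} [AddCommGroup M] [Module K M]
    {P W : ℕ → Submodule K M} (hind : iSupIndep P) (hW : ∀ j, W j ≤ P j) (i : ℕ) :
    (⨆ j, W j) ⊓ P i = W i := by
  refine le_antisymm ?_ (le_inf (le_iSup _ _) (hW i))
  rintro x ⟨hx1, hx2⟩
  have hle : (⨆ j, W j) ≤ W i ⊔ ⨆ j, ⨆ (_ : j ≠ i), P j := by
    refine iSup_le fun j => ?_
    rcases eq_or_ne j i with rfl | hj
    · exact le_sup_left
    · exact le_sup_of_le_right (le_trans (hW j) (le_iSup_of_le j (le_iSup_of_le hj le_rfl)))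
  obtain ⟨a, haW, b, hbP, hab⟩ := Submodule.mem_sup.mp (hle hx1)
  have hbPi : b ∈ P i := by
    have : b = x - a := by rw [← hab]; abel
    rw [this]; exact Submodule.sub_mem _ hx2 (hW i haW)
  have hb0 : b = 0 := by
    have := hind i
    rw [Submodule.disjoint_def] at this
    exact this b hbPi hbP
  rw [← hab, hb0, add_zero]; exact haW

theorem H_isHomogeneous {H : Ideal (MvPolynomial σ K)} (hhom : IsHomogPolyIdeal H) :
    Ideal.IsHomogeneous (homogeneousSubmodule σ K) H := by
  obtain ⟨T, rfl, hT⟩ := hhom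
  exact Ideal.homogeneous_span _ _ fun t ht => (hT t ht).imp fun i hi => hi

theorem iSup_gradedPiece_eq_top (H : Ideal (MvPolynomial σ K)) :
    ⨆ i, gradedPiece H i = ⊤ := by
  have h1 : ⨆ i, (homogeneousSubmodule σ K i) = ⊤ :=
    (DirectSum.Decomposition.isInternal (homogeneousSubmodule σ K)).submodule_iSup_eq_top
  have h2 : ⨆ i, gradedPiece H i
      = Submodule.map (Ideal.Quotient.mkₐ K H).toLinearMap (⨆ i, homogeneousSubmodule σ K i) :=
    (Submodule.map_iSup _ _).symm
  rw [h2, h1, Submodule.map_top, LinearMap.range_eq_top]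
  exact Ideal.Quotient.mkₐ_surjective K H

theorem decompose_zero_of_mem_biSup {r : MvPolynomial σ K} {i : ℕ}
    (h : r ∈ ⨆ j, ⨆ (_ : j ≠ i), homogeneousSubmodule σ K j) :
    (DirectSum.decompose (homogeneousSubmodule σ K) r i : MvPolynomial σ K) = 0 := by
  refine Submodule.iSup_induction (motive := fun y =>
    (DirectSum.decompose (homogeneousSubmodule σ K) y i : MvPolynomial σ K) = 0) _ h ?_ ?_ ?_
  · intro j y hy
    show (DirectSum.decompose (homogeneousSubmodule σ K) y i : MvPolynomial σ K) = 0
    rcases eq_or_ne j i with rfl | hj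
    · have : (⨆ (_ : j ≠ j), homogeneousSubmodule σ K j) = ⊥ := iSup_neg (fun h => h rfl)
      rw [this] at hy
      simp only [Submodule.mem_bot] at hy
      simp [hy]
    · have hy' : y ∈ homogeneousSubmodule σ K j := by
        rwa [iSup_pos hj] at hy
      exact DirectSum.decompose_of_mem_ne _ hy' hj
  · show (DirectSum.decompose (homogeneousSubmodule σ K) (0:MvPolynomial σ K) i
        : MvPolynomial σ K) = 0
    simp
  · intro y z hy hz
    show (DirectSum.decompose (homogeneousSubmodule σ K) (y + z) i : MvPolynomial σ K) = 0
    simp only at hy hz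
    rw [DirectSum.decompose_add]
    simp only [DirectSum.add_apply, Submodule.coe_add, hy, hz, add_zero]

theorem iSupIndep_gradedPiece {H : Ideal (MvPolynomial σ K)} (hhom : IsHomogPolyIdeal H) :
    iSupIndep (gradedPiece H) := by
  have hH := H_isHomogeneous hhom
  intro i
  rw [Submodule.disjoint_def]
  intro x hx hx'
  obtain ⟨r, hr, rfl⟩ := hx
  have h2 : (⨆ j, ⨆ (_ : j ≠ i), gradedPiece H j)
      = Submodule.map (Ideal.Quotient.mkₐ K H).toLinearMap
        (⨆ j, ⨆ (_ : j ≠ i), homogeneousSubmodule σ K j) := by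
    simp only [Submodule.map_iSup, gradedPiece]
  rw [h2] at hx'
  obtain ⟨r', hr', heq⟩ := hx'
  have hsub : r - r' ∈ H := by
    rw [← Ideal.Quotient.eq]
    exact heq.symm
  have hd : (DirectSum.decompose (homogeneousSubmodule σ K) (r - r') i : MvPolynomial σ K) ∈ H :=
    hH i hsub
  rw [DirectSum.decompose_sub] at hd
  have e1 : (DirectSum.decompose (homogeneousSubmodule σ K) r i : MvPolynomial σ K) = r :=
    DirectSum.decompose_of_mem_same _ hr
  have e2 : (DirectSum.decompose (homogeneousSubmodule σ K) r' i : MvPolynomial σ K) = 0 :=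
    decompose_zero_of_mem_biSup hr'
  simp only [DirectSum.sub_apply, Submodule.coe_sub, e1, e2, sub_zero] at hd
  show Ideal.Quotient.mk H r = 0
  rwa [Ideal.Quotient.eq_zero_iff_mem]

theorem gradedPiece_mul {H : Ideal (MvPolynomial σ K)} {j k : ℕ}
    {s x : MvPolynomial σ K ⧸ H} (hs : s ∈ gradedPiece H j) (hx : x ∈ gradedPiece H k) :
    s * x ∈ gradedPiece H (j + k) := by
  obtain ⟨a, ha, rfl⟩ := hs
  obtain ⟨b, hb, rfl⟩ := hx
  refine ⟨a * b, MvPolynomial.IsHomogeneous.mul ha hb, ?_⟩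
  show Ideal.Quotient.mkₐ K H (a * b)
    = Ideal.Quotient.mkₐ K H a * Ideal.Quotient.mkₐ K H b
  exact map_mul _ a b

theorem restrictScalars_eq_iSup_inf {H : Ideal (MvPolynomial σ K)}
    {J : Ideal (MvPolynomial σ K ⧸ H)} (hJ : IsHomogIdealS H J) :
    Submodule.restrictScalars K J
      = ⨆ i, (Submodule.restrictScalars K J ⊓ gradedPiece H i) := by
  set M := ⨆ i, (Submodule.restrictScalars K J ⊓ gradedPiece H i) with hM
  refine le_antisymm ?_ (iSup_le fun i => inf_le_left)
  -- closure under multiplication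
  have hmul : ∀ x ∈ M, ∀ s : MvPolynomial σ K ⧸ H, s * x ∈ M := by
    intro x hx
    refine Submodule.iSup_induction (motive := fun y => ∀ s, s * y ∈ M) _ hx ?_ ?_ ?_
    · rintro k y ⟨hyJ, hyk⟩ s
      show s * y ∈ M
      have hs : s ∈ ⨆ j, gradedPiece H j := by
        rw [iSup_gradedPiece_eq_top]; trivial
      refine Submodule.iSup_induction (motive := fun z => z * y ∈ M) _ hs ?_ ?_ ?_
      · intro j z hz
        show z * y ∈ M
        have h1 : z * y ∈ gradedPiece H (j + k) := gradedPiece_mul hz hyk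
        have h2 : z * y ∈ Submodule.restrictScalars K J := J.mul_mem_left z hyJ
        exact Submodule.mem_iSup_of_mem (j + k) (Submodule.mem_inf.mpr ⟨h2, h1⟩)
      · show (0 : MvPolynomial σ K ⧸ H) * y ∈ M
        rw [zero_mul]; exact M.zero_mem
      · intro u v hu hv
        show (u + v) * y ∈ M
        rw [add_mul]; exact M.add_mem hu hv
    · intro s
      show s * 0 ∈ M
      rw [mul_zero]; exact M.zero_mem
    · intro y z hy hz s
      show s * (y + z) ∈ M
      rw [mul_add]; exact M.add_mem (hy s) (hz s)
  obtain ⟨T, hJT, hT⟩ := hJ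
  intro x hx
  have hx' : x ∈ Ideal.span T := by rwa [← hJT]
  refine Submodule.span_induction (p := fun y _ => y ∈ M) ?_ ?_ ?_ ?_ hx'
  · intro t ht
    obtain ⟨i, hi⟩ := hT t ht
    have htJ : t ∈ J := by rw [hJT]; exact Ideal.subset_span ht
    exact Submodule.mem_iSup_of_mem i (Submodule.mem_inf.mpr ⟨htJ, hi⟩)
  · exact M.zero_mem
  · intro y z _ _ hy hz; exact M.add_mem hy hz
  · intro a y _ hy
    rw [smul_eq_mul]
    exact hmul y hy a

end Helpers


section HelpersC

variable {K : Type*} [Field K] {σ : Type*} {α : Type*}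

instance gradedPiece_finiteDimensional [Finite σ] (H : Ideal (MvPolynomial σ K)) (i : ℕ) :
    FiniteDimensional K ↥(gradedPiece H i) := by
  haveI h1 : FiniteDimensional K ↥(homogeneousSubmodule σ K i) :=
    Submodule.finiteDimensional_of_le (S₂ := restrictTotalDegree σ K i)
      (fun p hp => by
        rw [MvPolynomial.mem_restrictTotalDegree]
        exact MvPolynomial.IsHomogeneous.totalDegree_le hp)
  exact Module.Finite.map _ _

theorem B_finite [Finite σ] {H : Ideal (MvPolynomial σ K)}
    {B : ℕ → Set (MvPolynomial σ K ⧸ H)} (hB : IsLeveledBasis H B) (i : ℕ) :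
    (B i).Finite := by
  have hsub : B i ⊆ gradedPiece H i := by
    rw [← (hB i).2.2]; exact Submodule.subset_span
  set v : ↥(B i) → ↥(gradedPiece H i) := fun b => ⟨(b : MvPolynomial σ K ⧸ H), hsub b.2⟩ with hv
  have hli : LinearIndependent K v := by
    apply LinearIndependent.of_comp (gradedPiece H i).subtype
    exact (hB i).2.1
  have : Finite ↥(B i) := hli.finite
  exact Set.toFinite _

theorem key_count [Finite σ] {H : Ideal (MvPolynomial σ K)}
    {Ole : (MvPolynomial σ K ⧸ H) → (MvPolynomial σ K ⧸ H) → Prop}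
    (hO : IsLinOrderOn Ole (monoSet H))
    {B : ℕ → Set (MvPolynomial σ K ⧸ H)} (hB : IsLeveledBasis H B)
    (I : Ideal (MvPolynomial σ K ⧸ H)) (i : ℕ) :
    ∀ (n : ℕ) (s : Set (MvPolynomial σ K ⧸ H)), s ⊆ B i →
      (∀ a ∈ s, ∀ b ∈ B i, Ole a b → b ∈ s) → s.ncard = n →
      Module.finrank K
          ↥((Submodule.restrictScalars K I ⊓ gradedPiece H i) ⊓ Submodule.span K s)
        = (IMS H Ole B I i ∩ s).ncard := by
  intro n
  induction n with
  | zero =>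
    intro s hsB _ hcard
    have hfin : s.Finite := (B_finite hB i).subset hsB
    have hs : s = ∅ := (Set.ncard_eq_zero hfin).mp hcard
    subst hs
    simp [Submodule.span_empty]
  | succ n ih =>
    intro s hsB hup hcard
    set V := Submodule.restrictScalars K I ⊓ gradedPiece H i with hVdef
    have hBfin := B_finite hB i
    have hfin : s.Finite := hBfin.subset hsB
    have hne : s.Nonempty := by
      rw [Set.nonempty_iff_ne_empty]
      intro h
      rw [h, Set.ncard_empty] at hcard
      exact Nat.succ_ne_zero n hcard.symm
    have hsT : s ⊆ monoSet H := subset_trans hsB (hB i).1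
    obtain ⟨m, hms, hmin⟩ := exists_ole_min Ole hO hfin hne hsT
    set s' := s \ {m} with hs'def
    have hs'B : s' ⊆ B i := (Set.diff_subset).trans hsB
    have hs'up : ∀ a ∈ s', ∀ b ∈ B i, Ole a b → b ∈ s' := by
      rintro a ⟨has, ham⟩ b hbB hab
      refine ⟨hup a has b hbB hab, ?_⟩
      intro hbm
      rw [Set.mem_singleton_iff] at hbm
      subst hbm
      exact ham (Set.mem_singleton_iff.mpr
        (hO.2.1 a (hsT has) b (hsT hms) hab (hmin a has)))
    have hs'card : s'.ncard = n := by
      rw [hs'def, Set.ncard_diff_singleton_of_mem hms, hcard]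
      omega
    have hseq : s = {b ∈ B i | Ole m b} := by
      ext b
      constructor
      · intro hb; exact ⟨hsB hb, hmin b hb⟩
      · rintro ⟨hbB, hmb⟩; exact hup m hms b hbB hmb
    have hs'eq : s' = {b ∈ B i | Ole m b ∧ b ≠ m} := by
      rw [hs'def]
      ext b
      constructor
      · rintro ⟨hbs, hbm⟩
        refine ⟨hsB hbs, hmin b hbs, ?_⟩
        intro h; exact hbm (Set.mem_singleton_iff.mpr h)
      · rintro ⟨hbB, hmb, hbm⟩
        exact ⟨hup m hms b hbB hmb, fun h => hbm (Set.mem_singleton_iff.mp h)⟩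
    have hins : insert m s' = s := by
      rw [hs'def, Set.insert_diff_singleton]
      exact Set.insert_eq_self.mpr hms
    have hIMSsub : IMS H Ole B I i ⊆ B i := by
      rintro x ⟨f, _, _, _, hxB, _, _⟩
      exact hxB
    have hIMSfin : (IMS H Ole B I i).Finite := hBfin.subset hIMSsub
    by_cases hcase : ∀ x, x ∈ V ⊓ Submodule.span K s → x ∈ Submodule.span K s'
    · have heq2 : V ⊓ Submodule.span K s = V ⊓ Submodule.span K s' := by
        refine le_antisymm ?_ (inf_le_inf_left _ (Submodule.span_mono Set.diff_subset))
        intro x hx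
        exact Submodule.mem_inf.mpr ⟨(Submodule.mem_inf.mp hx).1, hcase x hx⟩
      have hmIMS : m ∉ IMS H Ole B I i := by
        rintro ⟨f, hfI, hfgp, hf0, hmB, hfspan, hfnot⟩
        apply hfnot
        rw [← hs'eq]
        apply hcase
        refine Submodule.mem_inf.mpr ⟨Submodule.mem_inf.mpr ⟨hfI, hfgp⟩, ?_⟩
        rw [← hseq] at hfspan
        exact hfspan
      have hiset : IMS H Ole B I i ∩ s = IMS H Ole B I i ∩ s' := by
        rw [← hins, Set.inter_insert_of_notMem hmIMS]
      rw [heq2, hiset]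
      exact ih s' hs'B hs'up hs'card
    · push_neg at hcase
      obtain ⟨f₀, hf₀mem, hf₀not⟩ := hcase
      have hf₀V : f₀ ∈ V := (Submodule.mem_inf.mp hf₀mem).1
      have hf₀s : f₀ ∈ Submodule.span K s := (Submodule.mem_inf.mp hf₀mem).2
      have hf₀0 : f₀ ≠ 0 := by
        rintro rfl; exact hf₀not (Submodule.zero_mem _)
      have hmIMS : m ∈ IMS H Ole B I i := by
        refine ⟨f₀, (Submodule.mem_inf.mp hf₀V).1, (Submodule.mem_inf.mp hf₀V).2, hf₀0,
          hsB hms, ?_, ?_⟩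
        · rw [← hseq]; exact hf₀s
        · rw [← hs'eq]; exact hf₀not
      have hsup : V ⊓ Submodule.span K s
          = (V ⊓ Submodule.span K s') ⊔ Submodule.span K {f₀} := by
        refine le_antisymm ?_ (sup_le
          (inf_le_inf_left _ (Submodule.span_mono Set.diff_subset)) ?_)
        · intro x hx
          obtain ⟨hxV, hxs⟩ := Submodule.mem_inf.mp hx
          obtain ⟨c, hc⟩ := exists_smul_sub_mem_span s m hf₀s hf₀not hxs
          have hx1 : x - c • f₀ ∈ V := V.sub_mem hxV (V.smul_mem c hf₀V)
          have hxe : x = (x - c • f₀) + c • f₀ := by abel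
          rw [hxe]
          exact Submodule.add_mem _
            (Submodule.mem_sup_left (Submodule.mem_inf.mpr ⟨hx1, hc⟩))
            (Submodule.mem_sup_right
              (Submodule.smul_mem _ c (Submodule.mem_span_singleton_self f₀)))
        · rw [Submodule.span_le, Set.singleton_subset_iff]
          exact hf₀mem
      haveI : FiniteDimensional K ↥(V ⊓ Submodule.span K s') :=
        Submodule.finiteDimensional_of_le (S₂ := gradedPiece H i)
          (le_trans inf_le_left inf_le_right)
      have hf₀notin : f₀ ∉ V ⊓ Submodule.span K s' := fun h =>
        hf₀not (Submodule.mem_inf.mp h).2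
      rw [hsup, finrank_sup_span_singleton _ hf₀notin]
      have hiset : IMS H Ole B I i ∩ s = insert m (IMS H Ole B I i ∩ s') := by
        rw [← hins, Set.inter_insert_of_mem hmIMS]
      have hmnotin : m ∉ IMS H Ole B I i ∩ s' := by
        rintro ⟨_, _, hm2⟩
        exact hm2 rfl
      rw [hiset, Set.ncard_insert_of_notMem hmnotin (hIMSfin.inter_of_left s')]
      rw [ih s' hs'B hs'up hs'card]

theorem hilb_eq_finrank_IMV [Finite σ] {H : Ideal (MvPolynomial σ K)}
    {Ole : (MvPolynomial σ K ⧸ H) → (MvPolynomial σ K ⧸ H) → Prop}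
    (hO : IsLinOrderOn Ole (monoSet H))
    {B : ℕ → Set (MvPolynomial σ K ⧸ H)} (hB : IsLeveledBasis H B)
    (I : Ideal (MvPolynomial σ K ⧸ H)) (i : ℕ) :
    hilbI H I i = Module.finrank K ↥(IMVlvl H Ole B I i) := by
  classical
  have h1 := key_count hO hB I i ((B i).ncard) (B i) subset_rfl
    (fun a _ b hb _ => hb) rfl
  have hVle : (Submodule.restrictScalars K I ⊓ gradedPiece H i) ≤ Submodule.span K (B i) := by
    rw [(hB i).2.2]; exact inf_le_right
  rw [inf_eq_left.mpr hVle] at h1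
  have hIMSsub : IMS H Ole B I i ⊆ B i := by
    rintro x ⟨f, _, _, _, hxB, _, _⟩
    exact hxB
  rw [Set.inter_eq_self_of_subset_left hIMSsub] at h1
  have hIMSfin : (IMS H Ole B I i).Finite := (B_finite hB i).subset hIMSsub
  have hli : LinearIndependent K
      (fun x : ↥(IMS H Ole B I i) => (x : MvPolynomial σ K ⧸ H)) :=
    LinearIndepOn.mono (v := id) (hB i).2.1 hIMSsub
  haveI := hIMSfin.fintype
  rw [hilbI, h1, IMVlvl, finrank_span_set_eq_card hli, ← Set.ncard_eq_toFinset_card']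

end HelpersC

/-- For a total order `Ole` on `M_S`, a leveled monomial basis `B` of `S`
and a homogeneous ideal `I` of `S`, the following are equivalent: (1) `IMV(I)` is an ideal
of `S`; (2) `IMV(I) = IMI(I)`; (3) `Hilb_I = Hilb_{IMV(I)} = Hilb_{IMI(I)}`. -/
theorem IMV_ideal_iff_eq_IMI_iff_hilb
    {K : Type*} [Field K] {d : ℕ} (hd : 1 ≤ d)
    (H : Ideal (MvPolynomial (Fin d) K)) (hhom : IsHomogPolyIdeal H) (hne : H ≠ ⊤)
    (Ole : (MvPolynomial (Fin d) K ⧸ H) → (MvPolynomial (Fin d) K ⧸ H) → Prop)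
    (hO : IsLinOrderOn Ole (monoSet H))
    (B : ℕ → Set (MvPolynomial (Fin d) K ⧸ H)) (hB : IsLeveledBasis H B)
    (I : Ideal (MvPolynomial (Fin d) K ⧸ H)) (hI : IsHomogIdealS H I) :
    (IsIdealCarrier H (⨆ i : ℕ, IMVlvl H Ole B I i) ↔
      (⨆ i : ℕ, IMVlvl H Ole B I i) = Submodule.restrictScalars K (IMI H Ole B I)) ∧
    (IsIdealCarrier H (⨆ i : ℕ, IMVlvl H Ole B I i) ↔
      ((∀ i : ℕ, hilbI H I i = Module.finrank K ↥(IMVlvl H Ole B I i)) ∧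
        (∀ i : ℕ, hilbI H I i = hilbI H (IMI H Ole B I) i))) := by
  classical
  have hIMSsub : ∀ j, IMS H Ole B I j ⊆ B j := by
    rintro j x ⟨f, _, _, _, hxB, _, _⟩
    exact hxB
  have hIMV_le_gp : ∀ j, IMVlvl H Ole B I j ≤ gradedPiece H j := by
    intro j
    rw [IMVlvl, ← (hB j).2.2]
    exact Submodule.span_mono (hIMSsub j)
  have hle : (⨆ i : ℕ, IMVlvl H Ole B I i)
      ≤ Submodule.restrictScalars K (IMI H Ole B I) := by
    refine iSup_le fun j => ?_
    rw [IMVlvl]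
    refine Submodule.span_le.mpr fun m hm => ?_
    exact Ideal.subset_span (Set.mem_iUnion.mpr ⟨j, hm⟩)
  have hAB : IsIdealCarrier H (⨆ i : ℕ, IMVlvl H Ole B I i) ↔
      (⨆ i : ℕ, IMVlvl H Ole B I i) = Submodule.restrictScalars K (IMI H Ole B I) := by
    constructor
    · rintro ⟨J, hJ⟩
      refine le_antisymm hle ?_
      have hJle : IMI H Ole B I ≤ J := by
        rw [IMI, Ideal.span_le]
        intro m hm
        rw [Set.mem_iUnion] at hm
        obtain ⟨j, hmj⟩ := hm
        have h1 : m ∈ IMVlvl H Ole B I j := Submodule.subset_span hmj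
        have h2 : m ∈ (⨆ i : ℕ, IMVlvl H Ole B I i) := Submodule.mem_iSup_of_mem j h1
        rw [← hJ] at h2
        exact h2
      intro x hx
      rw [← hJ]
      exact hJle hx
    · intro h
      exact ⟨IMI H Ole B I, h.symm⟩
  refine ⟨hAB, ?_⟩
  have hU : ∀ i, hilbI H I i = Module.finrank K ↥(IMVlvl H Ole B I i) :=
    fun i => hilb_eq_finrank_IMV hO hB I i
  have hind : iSupIndep (gradedPiece H) := iSupIndep_gradedPiece hhom
  constructor
  · intro hA
    refine ⟨hU, fun i => ?_⟩
    have hEq := hAB.mp hA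
    have hpc : Submodule.restrictScalars K (IMI H Ole B I) ⊓ gradedPiece H i
        = IMVlvl H Ole B I i := by
      rw [← hEq]
      exact iSup_inf_piece hind hIMV_le_gp i
    rw [hU i]
    show Module.finrank K ↥(IMVlvl H Ole B I i)
      = Module.finrank K ↥(Submodule.restrictScalars K (IMI H Ole B I) ⊓ gradedPiece H i)
    rw [hpc]
  · rintro ⟨_, hhilb⟩
    apply hAB.mpr
    have hpiece : ∀ i, IMVlvl H Ole B I i
        = Submodule.restrictScalars K (IMI H Ole B I) ⊓ gradedPiece H i := by
      intro i
      have hle1 : IMVlvl H Ole B I i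
          ≤ Submodule.restrictScalars K (IMI H Ole B I) ⊓ gradedPiece H i := by
        refine le_inf ?_ (hIMV_le_gp i)
        rw [IMVlvl]
        refine Submodule.span_le.mpr fun m hm => ?_
        exact Ideal.subset_span (Set.mem_iUnion.mpr ⟨i, hm⟩)
      haveI : FiniteDimensional K
          ↥(Submodule.restrictScalars K (IMI H Ole B I) ⊓ gradedPiece H i) :=
        Submodule.finiteDimensional_of_le (S₂ := gradedPiece H i) inf_le_right
      refine Submodule.eq_of_le_of_finrank_eq hle1 ?_
      rw [← hU i, hhilb i]
      rfl
    have hIMIhom : IsHomogIdealS H (IMI H Ole B I) := by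
      refine ⟨⋃ j : ℕ, IMS H Ole B I j, rfl, ?_⟩
      intro t ht
      rw [Set.mem_iUnion] at ht
      obtain ⟨j, htj⟩ := ht
      refine ⟨j, ?_⟩
      rw [← (hB j).2.2]
      exact Submodule.subset_span (hIMSsub j htj)
    rw [restrictScalars_eq_iSup_inf hIMIhom]
    exact iSup_congr hpiece
end

section
/- Suppose O is a monomial order on M_S and S is level linearly independent (so S has a unique leveled monomial basis, namely B_i = the set of degree-i monomials). Then for every homogeneous ideal I of S, the initial monomial vector space IMV(I) is an ideal of S, and Hilb_I = Hilb_{IMV(I)} = Hilb_{IMI(I)}. -/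
open MvPolynomial

set_option synthInstance.maxHeartbeats 1000000
set_option maxHeartbeats 1000000

section BasicAux
open Submodule Module MvPolynomial

variable {K : Type*} [Field K] {d : ℕ} (H : Ideal (MvPolynomial (Fin d) K))

lemma sum_eq_degree (p : Fin d →₀ ℕ) : (p.sum fun _ e => e) = p.degree := rfl

lemma exps_finite (i : ℕ) : {p : Fin d →₀ ℕ | p.degree = i}.Finite := by
  have hsub : {p : Fin d →₀ ℕ | p.degree = i} ⊆
      (⇑) ⁻¹' (Set.univ.pi fun _ : Fin d => Set.Iic i) := by
    intro p hp j _
    simp only [Set.mem_Iic]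
    by_cases h0 : p j = 0
    · omega
    · have hj : j ∈ p.support := Finsupp.mem_support_iff.mpr h0
      have h1 : p j ≤ ∑ k ∈ p.support, p k :=
        Finset.single_le_sum (f := fun k => p k) (fun k _ => Nat.zero_le _) hj
      have h2 : ∑ k ∈ p.support, p k = p.degree := rfl
      have h3 : p.degree = i := hp
      omega
  exact Set.Finite.subset (Set.Finite.preimage
    (Set.injOn_of_injective (DFunLike.coe_injective))
    (Set.Finite.pi (fun _ => Set.finite_Iic i))) hsub

lemma lvlMono_finite (i : ℕ) : (lvlMono H i).Finite := by
  apply Set.Finite.subset ((exps_finite (d := d) i).image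
    (fun p => Ideal.Quotient.mk H (monomial p (1 : K))))
  rintro m ⟨-, p, hp, rfl⟩
  exact ⟨p, by rwa [sum_eq_degree] at hp, rfl⟩

lemma mk_monomial_mem (p : Fin d →₀ ℕ) (h0 : Ideal.Quotient.mk H (monomial p (1:K)) ≠ 0) :
    Ideal.Quotient.mk H (monomial p (1:K)) ∈ lvlMono H p.degree :=
  ⟨⟨h0, p, rfl⟩, p, rfl, rfl⟩

lemma span_lvlMono (i : ℕ) : span K (lvlMono H i) = gradedPiece H i := by
  apply le_antisymm
  · rw [Submodule.span_le]
    rintro m ⟨-, p, hp, rfl⟩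
    exact ⟨monomial p 1, (mem_homogeneousSubmodule _ _).mpr
      (isHomogeneous_monomial 1 (by rwa [sum_eq_degree] at hp)), by
        simp [Ideal.Quotient.mkₐ_eq_mk]⟩
  · rintro x ⟨F, hF, rfl⟩
    have hsupp : ↑F.support ⊆ {v : Fin d →₀ ℕ | v.degree = i} := by
      rw [homogeneousSubmodule_eq_finsupp_supported] at hF
      exact AddMonoidAlgebra.mem_supported.mp hF
    set L := (Ideal.Quotient.mkₐ K H).toLinearMap with hL
    have : L F = ∑ v ∈ F.support, (coeff v F) • L (monomial v (1:K)) := by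
      conv_lhs => rw [F.as_sum]
      rw [map_sum]
      congr 1
      funext v
      rw [← map_smul, smul_monomial, smul_eq_mul, mul_one]
    rw [this]
    apply Submodule.sum_mem
    intro v hv
    apply Submodule.smul_mem
    by_cases h0 : L (monomial v (1:K)) = 0
    · rw [h0]; exact Submodule.zero_mem _
    · apply Submodule.subset_span
      have hdeg : v.degree = i := hsupp hv
      have := mk_monomial_mem H v (by
        simpa [hL, Ideal.Quotient.mkₐ_eq_mk] using h0)
      rw [hdeg] at this
      simpa [hL, Ideal.Quotient.mkₐ_eq_mk] using this

lemma mem_span_monoSet (x : MvPolynomial (Fin d) K ⧸ H) : x ∈ span K (monoSet H) := by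
  obtain ⟨F, rfl⟩ := Ideal.Quotient.mk_surjective x
  have hmk : Ideal.Quotient.mk H F = (Ideal.Quotient.mkₐ K H).toLinearMap F := by
    simp [Ideal.Quotient.mkₐ_eq_mk]
  rw [hmk]
  set L := (Ideal.Quotient.mkₐ K H).toLinearMap with hL
  have : L F = ∑ v ∈ F.support, (coeff v F) • L (monomial v (1:K)) := by
    conv_lhs => rw [F.as_sum]
    rw [map_sum]
    congr 1
    funext v
    rw [← map_smul, smul_monomial, smul_eq_mul, mul_one]
  rw [this]
  apply Submodule.sum_mem
  intro v _
  apply Submodule.smul_mem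
  by_cases h0 : L (monomial v (1:K)) = 0
  · rw [h0]; exact Submodule.zero_mem _
  · exact Submodule.subset_span ⟨h0, v, by simp [hL, Ideal.Quotient.mkₐ_eq_mk]⟩

lemma mul_lvlMono {q : Fin d →₀ ℕ} {b : MvPolynomial (Fin d) K ⧸ H} {i : ℕ}
    (hb : b ∈ lvlMono H i)
    (hne : Ideal.Quotient.mk H (monomial q (1:K)) * b ≠ 0) :
    Ideal.Quotient.mk H (monomial q (1:K)) * b ∈ lvlMono H (q.degree + i) := by
  obtain ⟨-, p, hp, rfl⟩ := hb
  rw [sum_eq_degree] at hp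
  have hmul : Ideal.Quotient.mk H (monomial q (1:K)) * Ideal.Quotient.mk H (monomial p (1:K))
      = Ideal.Quotient.mk H (monomial (q + p) (1:K)) := by
    rw [← map_mul, monomial_mul, one_mul]
  rw [hmul] at hne ⊢
  have := mk_monomial_mem H (q + p) hne
  rwa [show (q+p).degree = q.degree + p.degree by
    simp [Finsupp.degree_eq_weight_one, map_add], hp] at this

lemma gradedPiece_mul_s8 {q : Fin d →₀ ℕ} {f : MvPolynomial (Fin d) K ⧸ H} {i : ℕ}
    (hf : f ∈ gradedPiece H i) :
    Ideal.Quotient.mk H (monomial q (1:K)) * f ∈ gradedPiece H (q.degree + i) := by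
  obtain ⟨F, hF, rfl⟩ := hf
  refine ⟨monomial q 1 * F, ?_, ?_⟩
  · exact (mem_homogeneousSubmodule _ _).mpr
      ((isHomogeneous_monomial (1:K) rfl).mul ((mem_homogeneousSubmodule _ _).mp hF))
  · simp [Ideal.Quotient.mkₐ_eq_mk, map_mul]

end BasicAux

section Echelon
open Submodule Module



section Echelon
universe u v
variable {K : Type v} [Field K]

/-- auxiliary: the set of "initial coordinates" of a subspace of `ι → K`. -/
def IMcoordSet {ι : Type u} [LinearOrder ι] (W : Submodule K (ι → K)) : Set ι :=
  {m | ∃ g ∈ W, g m ≠ 0 ∧ ∀ k, k < m → g k = 0}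

theorem echelon_aux (n : ℕ) :
    ∀ {ι : Type u} [Fintype ι] [LinearOrder ι] (W : Submodule K (ι → K)),
      Fintype.card ι = n → Module.finrank K W = (IMcoordSet W).ncard := by
  induction n with
  | zero =>
    intro ι _ _ W hc
    haveI : IsEmpty ι := Fintype.card_eq_zero_iff.mp hc
    have h1 : Module.finrank K W = 0 := by
      have := Submodule.finrank_le W
      rw [Module.finrank_fintype_fun_eq_card, hc] at this
      omega
    have h2 : IMcoordSet W = ∅ := Set.eq_empty_of_isEmpty _
    rw [h1, h2, Set.ncard_empty]
  | succ n ih =>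
    intro ι _ _ W hc
    haveI : Nonempty ι := Fintype.card_pos_iff.mp (by omega)
    classical
    set m₀ : ι := Finset.univ.min' ⟨Classical.arbitrary ι, Finset.mem_univ _⟩ with hm₀def
    have hm₀le : ∀ i : ι, m₀ ≤ i := fun i => Finset.min'_le _ i (Finset.mem_univ _)
    set ι' := {i : ι // i ≠ m₀} with hι'
    have hcard' : Fintype.card ι' = n := by
      have : Fintype.card {i : ι // i = m₀} = 1 := Fintype.card_subtype_eq m₀
      have h2 := Fintype.card_subtype_compl (fun i : ι => i = m₀)
      rw [this, hc] at h2
      exact h2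
    set π : (ι → K) →ₗ[K] (ι' → K) := LinearMap.funLeft K K Subtype.val with hπ
    set ev : (ι → K) →ₗ[K] K := LinearMap.proj m₀ with hev
    set W₀ : Submodule K (ι → K) := W ⊓ LinearMap.ker ev with hW₀
    set W' : Submodule K (ι' → K) := W₀.map π with hW'
    -- finrank W = finrank W₀ + finrank (range of evaluation)
    have hrk : Module.finrank K W = Module.finrank K W₀ +
        Module.finrank K (LinearMap.range (ev.domRestrict W)) := by
      have h := LinearMap.finrank_range_add_finrank_ker (ev.domRestrict W)
      have hkereq : LinearMap.ker (ev.domRestrict W) = W₀.comap W.subtype := by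
        ext x
        simp [hW₀, LinearMap.mem_ker, x.2]
      have hEq : Module.finrank K (W₀.comap W.subtype) = Module.finrank K W₀ :=
        LinearEquiv.finrank_eq (Submodule.comapSubtypeEquivOfLe (show W₀ ≤ W from inf_le_left))
      rw [hkereq, hEq] at h
      omega
    -- finrank W₀ = finrank W'
    have hrk0 : Module.finrank K W₀ = Module.finrank K W' := by
      have h := LinearMap.finrank_range_add_finrank_ker (π.domRestrict W₀)
      have hker : LinearMap.ker (π.domRestrict W₀) = ⊥ := by
        rw [LinearMap.ker_eq_bot']
        intro x hx
        have hx' : ∀ i : ι', x.val i.val = 0 := fun i => congrFun hx i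
        have hx0 : x.val m₀ = 0 := x.2.2
        have : x.val = 0 := by
          funext i
          by_cases hi : i = m₀
          · rw [hi]; exact hx0
          · exact hx' ⟨i, hi⟩
        exact Subtype.ext this
      have hrange : LinearMap.range (π.domRestrict W₀) = W' := by
        rw [LinearMap.domRestrict, LinearMap.range_comp, Submodule.range_subtype]
      rw [hker, hrange, finrank_bot] at h
      omega
    have hval : Function.Injective (Subtype.val : ι' → ι) := Subtype.val_injective
    -- image description
    have himg : Subtype.val '' IMcoordSet W' = IMcoordSet W \ {m₀} := by
      ext m
      constructor
      · rintro ⟨m', hm', rfl⟩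
        obtain ⟨g', hg'W', hg'ne, hg'lt⟩ := hm'
        obtain ⟨g, hgW₀, rfl⟩ := hg'W'
        refine ⟨⟨g, hgW₀.1, hg'ne, ?_⟩, m'.2⟩
        intro k hk
        by_cases hkm : k = m₀
        · rw [hkm]; exact hgW₀.2
        · exact hg'lt ⟨k, hkm⟩ (Subtype.mk_lt_mk.mpr hk)
      · rintro ⟨⟨g, hgW, hgne, hglt⟩, hm⟩
        have hmne : m ≠ m₀ := hm
        have hgm₀ : g m₀ = 0 := hglt m₀ (lt_of_le_of_ne (hm₀le m) (Ne.symm hmne))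
        refine ⟨⟨m, hmne⟩, ⟨π g, ⟨g, ⟨hgW, hgm₀⟩, rfl⟩, hgne, ?_⟩, rfl⟩
        intro k hk
        exact hglt k.val (Subtype.coe_lt_coe.mpr hk)
    have hfin : (IMcoordSet W).Finite := Set.toFinite _
    by_cases hB : ∃ g ∈ W, g m₀ ≠ 0
    · -- m₀ ∈ IMcoordSet W, range of ev is ⊤
      have hm₀mem : m₀ ∈ IMcoordSet W := by
        obtain ⟨g, hgW, hg⟩ := hB
        exact ⟨g, hgW, hg, fun k hk => absurd (hm₀le k) (not_le.mpr hk)⟩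
      have hrange1 : Module.finrank K (LinearMap.range (ev.domRestrict W)) = 1 := by
        obtain ⟨g, hgW, hg⟩ := hB
        have : LinearMap.range (ev.domRestrict W) = ⊤ := by
          rw [eq_top_iff]
          intro c _
          have hmem : g m₀ ∈ LinearMap.range (ev.domRestrict W) := ⟨⟨g, hgW⟩, rfl⟩
          have := Submodule.smul_mem _ (c * (g m₀)⁻¹) hmem
          rwa [smul_eq_mul, mul_assoc, inv_mul_cancel₀ hg, mul_one] at this
        rw [this, finrank_top, Module.finrank_self]
      have hset : IMcoordSet W = insert m₀ (Subtype.val '' IMcoordSet W') := by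
        rw [himg]
        rw [Set.insert_diff_singleton, Set.insert_eq_of_mem hm₀mem]
      have hnotmem : m₀ ∉ Subtype.val '' IMcoordSet W' := by
        rw [himg]; simp
      rw [hrk, hrk0, hrange1, ih W' hcard', hset,
        Set.ncard_insert_of_notMem hnotmem (Set.toFinite _),
        Set.ncard_image_of_injective _ hval]
    · push_neg at hB
      have hrange0 : Module.finrank K (LinearMap.range (ev.domRestrict W)) = 0 := by
        have : LinearMap.range (ev.domRestrict W) = ⊥ := by
          rw [LinearMap.range_eq_bot]
          ext x
          exact hB x.val x.2
        rw [this, finrank_bot]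
      have hm₀not : m₀ ∉ IMcoordSet W := by
        rintro ⟨g, hgW, hg, -⟩
        exact hg (hB g hgW)
      have hset : IMcoordSet W = Subtype.val '' IMcoordSet W' := by
        rw [himg, Set.diff_singleton_eq_self hm₀not]
      rw [hrk, hrk0, hrange0, ih W' hcard', hset, Set.ncard_image_of_injective _ hval]
      omega

end Echelon


section KeyLevel
open Submodule Module

noncomputable def olinOrder {α : Type*} (r : α → α → Prop) (T : Set α)
    (h : IsLinOrderOn r T) : LinearOrder T where
  le a b := r a b
  le_refl a := h.1 a a.2
  le_trans a b c hab hbc := h.2.2.1 a a.2 b b.2 c c.2 hab hbc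
  le_antisymm a b hab hba := Subtype.ext (h.2.1 a a.2 b b.2 hab hba)
  le_total a b := h.2.2.2 a a.2 b b.2
  toDecidableLE := Classical.decRel _

lemma IsLinOrderOn.mono {α : Type*} {r : α → α → Prop} {T T' : Set α}
    (h : IsLinOrderOn r T) (hsub : T' ⊆ T) : IsLinOrderOn r T' :=
  ⟨fun a ha => h.1 a (hsub ha),
   fun a ha b hb => h.2.1 a (hsub ha) b (hsub hb),
   fun a ha b hb c hc => h.2.2.1 a (hsub ha) b (hsub hb) c (hsub hc),
   fun a ha b hb => h.2.2.2 a (hsub ha) b (hsub hb)⟩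

variable {K : Type*} [Field K] {d : ℕ} (H : Ideal (MvPolynomial (Fin d) K))

lemma key_level (Ole : (MvPolynomial (Fin d) K ⧸ H) → (MvPolynomial (Fin d) K ⧸ H) → Prop)
    (hOle : IsMonomialOrder H Ole) (hLI : LevelLinIndep H)
    (I : Ideal (MvPolynomial (Fin d) K ⧸ H)) (i : ℕ) :
    hilbI H I i = (IMS H Ole (fun j => lvlMono H j) I i).ncard ∧
    hilbI H I i = Module.finrank K ↥(IMVlvl H Ole (fun j => lvlMono H j) I i) := by
  classical
  have hlin : IsLinOrderOn Ole (lvlMono H i) :=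
    hOle.1.mono (fun m hm => hm.1)
  letI : LinearOrder ↥(lvlMono H i) := olinOrder Ole _ hlin
  haveI : Fintype ↥(lvlMono H i) := (lvlMono_finite H i).fintype
  have hlt_iff : ∀ a b : ↥(lvlMono H i), a < b ↔ (Ole ↑a ↑b ∧ (a : MvPolynomial (Fin d) K ⧸ H) ≠ ↑b) := by
    intro a b
    rw [lt_iff_le_and_ne]
    constructor
    · rintro ⟨h1, h2⟩; exact ⟨h1, fun hv => h2 (Subtype.ext hv)⟩
    · rintro ⟨h1, h2⟩; exact ⟨h1, fun hv => h2 (congrArg Subtype.val hv)⟩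
  have hli : LinearIndependent K (fun m : ↥(lvlMono H i) => (m : MvPolynomial (Fin d) K ⧸ H)) := hLI i
  set P := span K (Set.range (fun m : ↥(lvlMono H i) => (m : MvPolynomial (Fin d) K ⧸ H))) with hPdef
  have hP : P = gradedPiece H i := by
    rw [hPdef, Subtype.range_coe, span_lvlMono]
  set Bas : Basis ↥(lvlMono H i) K P := Module.Basis.span hli with hBas
  set e := Bas.equivFun with he
  set W : Submodule K (MvPolynomial (Fin d) K ⧸ H) :=
    Submodule.restrictScalars K I ⊓ gradedPiece H i with hW
  have hWP : W ≤ P := by rw [hP]; exact inf_le_right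
  set Wc := W.comap P.subtype with hWc
  set W' := Wc.map (e : P →ₗ[K] (↥(lvlMono H i) → K)) with hW'
  -- coordinate description of spans of subsets of the basis
  have hC1 : ∀ (fh : P) (s : Set ↥(lvlMono H i)),
      (fh : MvPolynomial (Fin d) K ⧸ H) ∈ span K (Subtype.val '' s) ↔ ∀ j ∉ s, e fh j = 0 := by
    intro fh s
    have himg : Subtype.val '' s = P.subtype '' (⇑Bas '' s) := by
      rw [Set.image_image]
      symm
      apply Set.image_congr
      intro j _
      exact congrArg Subtype.val (Module.Basis.span_apply hli j)
    rw [himg, Submodule.span_image, Submodule.mem_map]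
    constructor
    · rintro ⟨y, hy, hyeq⟩
      have hyfh : y = fh := Subtype.ext hyeq
      rw [hyfh, Basis.mem_span_image] at hy
      intro j hj
      have : j ∉ (Bas.repr fh).support := fun hmem => hj (hy hmem)
      simpa [he, Basis.equivFun_apply] using Finsupp.notMem_support_iff.mp this
    · intro hz
      refine ⟨fh, ?_, rfl⟩
      rw [Basis.mem_span_image]
      intro j hjsupp
      by_contra hj
      exact (Finsupp.mem_support_iff.mp hjsupp)
        (by simpa [he, Basis.equivFun_apply] using hz j hj)
  -- translation of the order sets
  have hsets1 : ∀ m : ↥(lvlMono H i),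
      {b | b ∈ lvlMono H i ∧ Ole ↑m b} = Subtype.val '' Set.Ici m := by
    intro m
    ext x
    constructor
    · rintro ⟨hx, hOx⟩
      exact ⟨⟨x, hx⟩, hOx, rfl⟩
    · rintro ⟨y, hy, rfl⟩
      exact ⟨y.2, hy⟩
  have hsets2 : ∀ m : ↥(lvlMono H i),
      {b | b ∈ lvlMono H i ∧ (Ole ↑m b ∧ b ≠ ↑m)} = Subtype.val '' Set.Ioi m := by
    intro m
    ext x
    constructor
    · rintro ⟨hx, hOx, hne⟩
      exact ⟨⟨x, hx⟩, (hlt_iff m ⟨x, hx⟩).mpr ⟨hOx, Ne.symm hne⟩, rfl⟩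
    · rintro ⟨y, hy, rfl⟩
      have := (hlt_iff m y).mp hy
      exact ⟨y.2, this.1, Ne.symm this.2⟩
  -- the IMS/IMcoordSet correspondence
  have hIMS : IMS H Ole (fun j => lvlMono H j) I i = Subtype.val '' IMcoordSet W' := by
    ext m
    constructor
    · rintro ⟨f, hfI, hfV, hfne, hmB, hsp1, hsp2⟩
      set mh : ↥(lvlMono H i) := ⟨m, hmB⟩ with hmh
      rw [show {b | b ∈ lvlMono H i ∧ Ole m b} = Subtype.val '' Set.Ici mh from hsets1 mh] at hsp1
      rw [show {b | b ∈ lvlMono H i ∧ (Ole m b ∧ b ≠ m)} = Subtype.val '' Set.Ioi mh from hsets2 mh] at hsp2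
      have hfP : f ∈ P := by rw [hP]; exact hfV
      have hfW' : e ⟨f, hfP⟩ ∈ W' :=
        ⟨⟨f, hfP⟩, by simp only [hWc, Submodule.mem_comap, Submodule.coe_subtype]; exact ⟨hfI, hfV⟩, rfl⟩
      have hcoord1 : ∀ j, j < mh → e ⟨f, hfP⟩ j = 0 := by
        intro j hj
        exact (hC1 ⟨f, hfP⟩ (Set.Ici mh)).mp hsp1 j (by simpa using not_le.mpr hj)
      have hcoordm : e ⟨f, hfP⟩ mh ≠ 0 := by
        intro h0
        apply hsp2
        apply (hC1 ⟨f, hfP⟩ (Set.Ioi mh)).mpr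
        intro j hj
        rcases lt_or_eq_of_le (not_lt.mp (by simpa using hj)) with h | h
        · exact hcoord1 j h
        · rw [h]; exact h0
      exact ⟨mh, ⟨e ⟨f, hfP⟩, hfW', hcoordm, hcoord1⟩, rfl⟩
    · rintro ⟨mh, ⟨g, hgW', hgm, hglt⟩, rfl⟩
      obtain ⟨fh, hfhWc, rfl⟩ := hgW'
      have hfW : (fh : MvPolynomial (Fin d) K ⧸ H) ∈ W := hfhWc
      have hfI : (fh : MvPolynomial (Fin d) K ⧸ H) ∈ I := hfW.1
      have hfV : (fh : MvPolynomial (Fin d) K ⧸ H) ∈ gradedPiece H i := hfW.2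
      refine ⟨↑fh, hfI, hfV, ?_, mh.2, ?_, ?_⟩
      · intro h0
        have : fh = 0 := Subtype.ext h0
        rw [this] at hgm
        simp at hgm
      · rw [show {b | b ∈ lvlMono H i ∧ Ole (↑mh) b} = Subtype.val '' Set.Ici mh from hsets1 mh]
        have hfh : fh = ⟨(fh : MvPolynomial (Fin d) K ⧸ H), fh.2⟩ := rfl
        apply (hC1 fh (Set.Ici mh)).mpr
        intro j hj
        exact hglt j (not_le.mp (by simpa using hj))
      · rw [show {b | b ∈ lvlMono H i ∧ (Ole (↑mh) b ∧ b ≠ ↑mh)} = Subtype.val '' Set.Ioi mh from hsets2 mh]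
        intro hsp
        exact hgm ((hC1 fh (Set.Ioi mh)).mp hsp mh (by simp))
  -- dimension counts
  have hrk1 : hilbI H I i = Module.finrank K ↥W := rfl
  have hrkWc : Module.finrank K ↥Wc = Module.finrank K ↥W :=
    (Submodule.comapSubtypeEquivOfLe hWP).finrank_eq
  have hrkW' : Module.finrank K ↥W' = Module.finrank K ↥Wc :=
    LinearEquiv.finrank_map_eq e Wc
  have hech := echelon_aux (K := K) (Fintype.card ↥(lvlMono H i)) W' rfl
  have h1 : hilbI H I i = (IMS H Ole (fun j => lvlMono H j) I i).ncard := by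
    rw [hrk1, ← hrkWc, ← hrkW', hech, hIMS,
      Set.ncard_image_of_injective _ Subtype.val_injective]
  refine ⟨h1, ?_⟩
  have hsubB : IMS H Ole (fun j => lvlMono H j) I i ⊆ lvlMono H i := by
    rintro m ⟨f, -, -, -, hmB, -, -⟩; exact hmB
  haveI : Fintype ↥(IMS H Ole (fun j => lvlMono H j) I i) :=
    ((lvlMono_finite H i).subset hsubB).fintype
  have hliIMS : LinearIndependent K
      (fun x : ↥(IMS H Ole (fun j => lvlMono H j) I i) => (x : MvPolynomial (Fin d) K ⧸ H)) :=
    ((hli.linearIndepOn_id' Subtype.range_coe).mono hsubB).linearIndependent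
  have : IMVlvl H Ole (fun j => lvlMono H j) I i =
      span K (IMS H Ole (fun j => lvlMono H j) I i) := rfl
  rw [this, finrank_span_set_eq_card hliIMS, ← Set.ncard_eq_toFinset_card', h1]

end KeyLevel

section MulAux
open Submodule Module MvPolynomial

variable {K : Type*} [Field K] {d : ℕ} (H : Ideal (MvPolynomial (Fin d) K))

lemma not_mem_span_lvl (hLI : LevelLinIndep H) {n : ℕ}
    {x : MvPolynomial (Fin d) K ⧸ H} (hx : x ∈ lvlMono H n)
    {u : Set (MvPolynomial (Fin d) K ⧸ H)} (hu : u ⊆ lvlMono H n) (hxu : x ∉ u) :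
    x ∉ span K u := by
  classical
  set v : ↥(lvlMono H n) → MvPolynomial (Fin d) K ⧸ H := fun m => ↑m with hv
  set s : Set ↥(lvlMono H n) := {j | (j : MvPolynomial (Fin d) K ⧸ H) ∈ u} with hs
  have himg : v '' s = u := by
    ext y
    constructor
    · rintro ⟨j, hj, rfl⟩; exact hj
    · intro hy; exact ⟨⟨y, hu hy⟩, hy, rfl⟩
  have hxs : (⟨x, hx⟩ : ↥(lvlMono H n)) ∉ s := hxu
  have := (hLI n).notMem_span_image (s := s) hxs
  rwa [himg] at this

lemma IMS_mul (Ole : (MvPolynomial (Fin d) K ⧸ H) → (MvPolynomial (Fin d) K ⧸ H) → Prop)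
    (hOle : IsMonomialOrder H Ole) (hLI : LevelLinIndep H)
    (I : Ideal (MvPolynomial (Fin d) K ⧸ H)) {i : ℕ} {q : Fin d →₀ ℕ}
    {μ : MvPolynomial (Fin d) K ⧸ H}
    (hμ : μ ∈ IMS H Ole (fun j => lvlMono H j) I i)
    (hne : Ideal.Quotient.mk H (monomial q (1:K)) * μ ≠ 0) :
    Ideal.Quotient.mk H (monomial q (1:K)) * μ ∈
      IMS H Ole (fun j => lvlMono H j) I (q.degree + i) := by
  classical
  obtain ⟨f, hfI, hfV, hfne, hμB, hsp1, hsp2⟩ := hμ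
  set m : MvPolynomial (Fin d) K ⧸ H := Ideal.Quotient.mk H (monomial q (1:K)) with hm
  have hmne : m ≠ 0 := fun h0 => hne (by rw [h0, zero_mul])
  have hmmono : m ∈ monoSet H := ⟨hmne, q, rfl⟩
  have hμmono : μ ∈ monoSet H := hμB.1
  set μ' : MvPolynomial (Fin d) K ⧸ H := m * μ with hμ'
  have hμ'B : μ' ∈ lvlMono H (q.degree + i) := mul_lvlMono H hμB hne
  have hμ'mono : μ' ∈ monoSet H := hμ'B.1
  set s : Set (MvPolynomial (Fin d) K ⧸ H) := {b | b ∈ lvlMono H i ∧ Ole μ b} with hsdef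
  set s' : Set (MvPolynomial (Fin d) K ⧸ H) := {b | b ∈ lvlMono H i ∧ (Ole μ b ∧ b ≠ μ)} with hs'def
  set t : Set (MvPolynomial (Fin d) K ⧸ H) :=
    {b | b ∈ lvlMono H (q.degree + i) ∧ Ole μ' b} with htdef
  set t' : Set (MvPolynomial (Fin d) K ⧸ H) :=
    {b | b ∈ lvlMono H (q.degree + i) ∧ (Ole μ' b ∧ b ≠ μ')} with ht'def
  set L : (MvPolynomial (Fin d) K ⧸ H) →ₗ[K] (MvPolynomial (Fin d) K ⧸ H) :=
    LinearMap.mulLeft K m with hL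
  have himg1 : (fun x => m * x) '' s ⊆ insert 0 t := by
    rintro y ⟨b, ⟨hbB, hbO⟩, rfl⟩
    dsimp only
    by_cases h0 : m * b = 0
    · rw [h0]; exact Set.mem_insert _ _
    · apply Set.mem_insert_of_mem
      refine ⟨mul_lvlMono H hbB h0, ?_⟩
      by_cases hbμ : b = μ
      · rw [hbμ]; exact hOle.1.1 μ' hμ'mono
      · exact (hOle.2 m μ b hmmono hμmono hbB.1 hbO (Ne.symm hbμ) hne h0).1
  have himg2 : (fun x => m * x) '' s' ⊆ insert 0 t' := by
    rintro y ⟨b, ⟨hbB, hbO, hbμ⟩, rfl⟩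
    dsimp only
    by_cases h0 : m * b = 0
    · rw [h0]; exact Set.mem_insert _ _
    · apply Set.mem_insert_of_mem
      have hord := hOle.2 m μ b hmmono hμmono hbB.1 hbO (Ne.symm hbμ) hne h0
      exact ⟨mul_lvlMono H hbB h0, hord.1, Ne.symm hord.2⟩
  -- decomposition f = c • μ + g
  have hins : s = insert μ s' := by
    ext x
    constructor
    · rintro ⟨hxB, hxO⟩
      by_cases hxμ : x = μ
      · exact Or.inl hxμ
      · exact Or.inr ⟨hxB, hxO, hxμ⟩
    · rintro (h | ⟨hxB, hxO, -⟩)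
      · rw [h]; exact ⟨hμB, hOle.1.1 μ hμmono⟩
      · exact ⟨hxB, hxO⟩
  have hfsup : f ∈ (K ∙ μ) ⊔ span K s' := by
    rw [← Submodule.span_insert, ← hins]; exact hsp1
  obtain ⟨cμ, hcμ, g, hg, hfeq⟩ := Submodule.mem_sup.mp hfsup
  obtain ⟨c, rfl⟩ := Submodule.mem_span_singleton.mp hcμ
  have hc : c ≠ 0 := by
    rintro rfl
    apply hsp2
    rw [← hfeq, zero_smul, zero_add]
    exact hg
  have hmg : m * g ∈ span K t' := by
    have h1 : m * g ∈ Submodule.map L (span K s') := ⟨g, hg, rfl⟩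
    rw [Submodule.map_span] at h1
    have h2 : span K ((fun x => m * x) '' s') ≤ span K (insert 0 t') :=
      Submodule.span_mono himg2
    rw [Submodule.span_insert_zero] at h2
    exact h2 h1
  have hf'eq : m * f = c • μ' + m * g := by
    rw [← hfeq, mul_add, mul_smul_comm]
  have hnotspan : μ' ∉ span K t' := by
    apply not_mem_span_lvl H hLI hμ'B (fun b hb => hb.1)
    rintro ⟨-, -, hfalse⟩
    exact hfalse rfl
  have hsp2' : m * f ∉ span K t' := by
    intro hmem
    apply hnotspan
    have : c • μ' = m * f - m * g := by rw [hf'eq]; ring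
    have hcs : c • μ' ∈ span K t' := by
      rw [this]; exact Submodule.sub_mem _ hmem hmg
    have := Submodule.smul_mem _ c⁻¹ hcs
    rwa [smul_smul, inv_mul_cancel₀ hc, one_smul] at this
  refine ⟨m * f, Ideal.mul_mem_left I m hfI, ?_, ?_, hμ'B, ?_, hsp2'⟩
  · exact gradedPiece_mul_s8 H hfV
  · intro h0
    exact hsp2' (by rw [h0]; exact Submodule.zero_mem _)
  · have h1 : m * f ∈ Submodule.map L (span K s) := ⟨f, hsp1, rfl⟩
    rw [Submodule.map_span] at h1
    have h2 : span K ((fun x => m * x) '' s) ≤ span K (insert 0 t) :=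
      Submodule.span_mono himg1
    rw [Submodule.span_insert_zero] at h2
    exact h2 h1

end MulAux

section GradedAux
open Submodule Module MvPolynomial DirectSum

attribute [local instance] MvPolynomial.gradedAlgebra

variable {K : Type*} [Field K] {d : ℕ} (H : Ideal (MvPolynomial (Fin d) K))

lemma isHomog_of_isHomogPolyIdeal (hhom : IsHomogPolyIdeal H) :
    H.IsHomogeneous (homogeneousSubmodule (Fin d) K) := by
  obtain ⟨T, hspan, hT⟩ := hhom
  rw [Ideal.IsHomogeneous.iff_exists]
  refine ⟨{x : (SetLike.homogeneousSubmonoid (homogeneousSubmodule (Fin d) K)) | ↑x ∈ T}, ?_⟩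
  rw [hspan]
  congr 1
  ext x
  simp only [Set.mem_image, Set.mem_setOf_eq]
  constructor
  · intro hx
    obtain ⟨n, hn⟩ := hT x hx
    exact ⟨⟨x, ⟨n, (mem_homogeneousSubmodule _ _).mpr hn⟩⟩, hx, rfl⟩
  · rintro ⟨y, hy, rfl⟩; exact hy

lemma homogComponent_mem (hhom : IsHomogPolyIdeal H) (n : ℕ)
    {h : MvPolynomial (Fin d) K} (hh : h ∈ H) : homogeneousComponent n h ∈ H := by
  have hH := isHomog_of_isHomogPolyIdeal H hhom
  have := hH n hh
  rwa [show ((DirectSum.decompose (homogeneousSubmodule (Fin d) K) h n :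
      homogeneousSubmodule (Fin d) K n) : MvPolynomial (Fin d) K) =
      homogeneousComponent n h from decomposition.decompose'_apply h n] at this

lemma graded_indep (hhom : IsHomogPolyIdeal H) {i : ℕ}
    {x : MvPolynomial (Fin d) K ⧸ H} (hx : x ∈ gradedPiece H i)
    (c : ℕ →₀ (MvPolynomial (Fin d) K ⧸ H)) (hc : ∀ j, c j ∈ gradedPiece H j)
    (hsum : (c.sum fun _ v => v) = x) : ∀ j, j ≠ i → c j = 0 := by
  classical
  have hlift : ∀ j : ℕ, ∃ G : MvPolynomial (Fin d) K,
      G ∈ homogeneousSubmodule (Fin d) K j ∧ Ideal.Quotient.mk H G = c j := by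
    intro j
    obtain ⟨G, hG, hGeq⟩ := hc j
    exact ⟨G, hG, by simpa [Ideal.Quotient.mkₐ_eq_mk] using hGeq⟩
  choose g hg1 hg2 using hlift
  obtain ⟨F, hF, hFeq⟩ := hx
  have hFeq' : Ideal.Quotient.mk H F = x := by simpa [Ideal.Quotient.mkₐ_eq_mk] using hFeq
  set D := (∑ j ∈ c.support, g j) - F with hD
  have hDH : D ∈ H := by
    apply (Ideal.Quotient.eq_zero_iff_mem).mp
    rw [hD, map_sub, map_sum]
    have : ∑ j ∈ c.support, Ideal.Quotient.mk H (g j) = ∑ j ∈ c.support, c j :=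
      Finset.sum_congr rfl fun j _ => hg2 j
    rw [this, hFeq']
    have hs : ∑ j ∈ c.support, c j = x := hsum
    rw [hs, sub_self]
  intro j₀ hj₀
  by_cases hjsupp : j₀ ∈ c.support
  · have hcomp0 : homogeneousComponent j₀ D ∈ H := homogComponent_mem H hhom j₀ hDH
    have heq : homogeneousComponent j₀ D = g j₀ := by
      rw [hD, map_sub, map_sum]
      have hterm : ∀ j ∈ c.support,
          homogeneousComponent j₀ (g j) = if j₀ = j then g j else 0 :=
        fun j _ => homogeneousComponent_of_mem (hg1 j)
      rw [Finset.sum_congr rfl hterm, homogeneousComponent_of_mem hF, if_neg hj₀,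
        Finset.sum_ite_eq c.support j₀ g, if_pos hjsupp, sub_zero]
    rw [heq] at hcomp0
    rw [← hg2 j₀]
    exact Ideal.Quotient.eq_zero_iff_mem.mpr hcomp0
  · exact Finsupp.notMem_support_iff.mp hjsupp

end GradedAux

/-- If `Ole` is a monomial order on `M_S` and `S` is level linearly
independent (so the unique leveled monomial basis is `B i = Lvl_i`), then for every
homogeneous ideal `I` of `S`, `IMV(I)` is an ideal of `S` and
`Hilb_I = Hilb_{IMV(I)} = Hilb_{IMI(I)}`. -/
theorem reducing_homogeneous_to_monomial
    {K : Type*} [Field K] {d : ℕ} (hd : 1 ≤ d)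
    (H : Ideal (MvPolynomial (Fin d) K)) (hhom : IsHomogPolyIdeal H) (hne : H ≠ ⊤)
    (Ole : (MvPolynomial (Fin d) K ⧸ H) → (MvPolynomial (Fin d) K ⧸ H) → Prop)
    (hOle : IsMonomialOrder H Ole)
    (hLI : LevelLinIndep H)
    (I : Ideal (MvPolynomial (Fin d) K ⧸ H)) (hI : IsHomogIdealS H I) :
    IsIdealCarrier H (⨆ i : ℕ, IMVlvl H Ole (fun j => lvlMono H j) I i) ∧
    (∀ i : ℕ, hilbI H I i =
      Module.finrank K ↥(IMVlvl H Ole (fun j => lvlMono H j) I i)) ∧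
    (∀ i : ℕ, hilbI H I i = hilbI H (IMI H Ole (fun j => lvlMono H j) I) i) := by
  classical
  set B : ℕ → Set (MvPolynomial (Fin d) K ⧸ H) := fun j => lvlMono H j with hB
  set N : Submodule K (MvPolynomial (Fin d) K ⧸ H) :=
    Submodule.span K (⋃ j : ℕ, IMS H Ole B I j) with hN
  have hsupN : (⨆ j : ℕ, IMVlvl H Ole B I j) = N := by
    rw [hN, Submodule.span_iUnion]
    rfl
  have hmulmono : ∀ m ∈ monoSet H, ∀ x ∈ N, m * x ∈ N := by
    intro m hm x hx
    obtain ⟨hm0, q, hq⟩ := hm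
    subst hq
    set L : (MvPolynomial (Fin d) K ⧸ H) →ₗ[K] (MvPolynomial (Fin d) K ⧸ H) :=
      LinearMap.mulLeft K (Ideal.Quotient.mk H (MvPolynomial.monomial q (1:K))) with hL
    have hmem : Ideal.Quotient.mk H (MvPolynomial.monomial q (1:K)) * x ∈ Submodule.map L N :=
      ⟨x, hx, rfl⟩
    rw [hN, Submodule.map_span] at hmem
    refine Submodule.span_le.mpr ?_ hmem
    rintro y ⟨z, hz, rfl⟩
    simp only [Set.mem_iUnion] at hz
    obtain ⟨j, hzj⟩ := hz
    show L z ∈ (N : Set (MvPolynomial (Fin d) K ⧸ H))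
    have hLz : L z = Ideal.Quotient.mk H (MvPolynomial.monomial q (1:K)) * z := rfl
    by_cases h0 : Ideal.Quotient.mk H (MvPolynomial.monomial q (1:K)) * z = 0
    · rw [hLz, h0]; exact Submodule.zero_mem N
    · have hin := IMS_mul H Ole hOle hLI I hzj h0
      rw [hLz]
      exact Submodule.subset_span (Set.mem_iUnion.mpr ⟨q.degree + j, hin⟩)
  have hsmul : ∀ (r : MvPolynomial (Fin d) K ⧸ H), ∀ x ∈ N, r * x ∈ N := by
    intro r x hx
    have hr : r ∈ Submodule.span K (monoSet H) := mem_span_monoSet H r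
    refine Submodule.span_induction (fun m hm => hmulmono m hm x hx) ?_ ?_ ?_ hr
    · rw [zero_mul]; exact N.zero_mem
    · intro a b _ _ ha hb; rw [add_mul]; exact N.add_mem ha hb
    · intro c a _ ha; rw [smul_mul_assoc]; exact N.smul_mem c ha
  set J : Ideal (MvPolynomial (Fin d) K ⧸ H) :=
    { carrier := N
      add_mem' := fun ha hb => N.add_mem ha hb
      zero_mem' := N.zero_mem
      smul_mem' := fun r x hx => by simpa [smul_eq_mul] using hsmul r x hx } with hJ
  have hJN : Submodule.restrictScalars K J = N := by
    ext x; exact Iff.rfl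
  have hpart2 : ∀ i, hilbI H I i = Module.finrank K ↥(IMVlvl H Ole B I i) :=
    fun i => (key_level H Ole hOle hLI I i).2
  refine ⟨⟨J, by rw [hsupN]; exact hJN⟩, hpart2, ?_⟩
  intro i
  have hIMVsub : ∀ j, IMVlvl H Ole B I j ≤ gradedPiece H j := by
    intro j
    have : IMVlvl H Ole B I j = Submodule.span K (IMS H Ole B I j) := rfl
    rw [this, ← span_lvlMono]
    apply Submodule.span_mono
    rintro m ⟨f, -, -, -, hmB, -, -⟩; exact hmB
  have hIMIN : Submodule.restrictScalars K (IMI H Ole B I) = N := by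
    apply le_antisymm
    · have hle : IMI H Ole B I ≤ J := Ideal.span_le.mpr (fun x hx => Submodule.subset_span hx)
      exact fun x hx => hle hx
    · rw [hN]
      exact Submodule.span_le.mpr (fun x hx => Ideal.subset_span hx)
  have hNi : N ⊓ gradedPiece H i = IMVlvl H Ole B I i := by
    apply le_antisymm
    · rintro x ⟨hxN, hxV⟩
      have hx2 : x ∈ ⨆ j, IMVlvl H Ole B I j := by rw [hsupN]; exact hxN
      rw [Submodule.mem_iSup_iff_exists_finsupp] at hx2
      obtain ⟨c, hc, hcsum⟩ := hx2
      have hcV : ∀ j, c j ∈ gradedPiece H j := fun j => hIMVsub j (hc j)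
      have hzero := graded_indep H hhom hxV c hcV hcsum
      have hxc : x = c i := by
        rw [← hcsum]
        show (∑ j ∈ c.support, c j) = c i
        apply Finset.sum_eq_single i (fun b _ hbne => hzero b hbne)
        intro hni
        exact Finsupp.notMem_support_iff.mp hni
      rw [hxc]
      exact hc i
    · apply le_inf
      · exact hsupN ▸ le_iSup (fun j => IMVlvl H Ole B I j) i
      · exact hIMVsub i
  have hfin : hilbI H (IMI H Ole B I) i = Module.finrank K ↥(IMVlvl H Ole B I i) := by
    show Module.finrank K ↥(Submodule.restrictScalars K (IMI H Ole B I) ⊓ gradedPiece H i) = _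
    rw [hIMIN, hNi]
  rw [hfin]
  exact hpart2 i
end Echelon
end

section
/- Suppose that every pair of distinct monomials of the same degree in S_x is K-linearly independent. Then the map sending (m_x + H_x, m_y + H_y) to m_x·m_y + (H_x + H_y) is a well-defined poset isomorphism from the Cartesian product 𝓜_{S_x} × 𝓜_{S_y} (with the product of the monomial-division partial orders) onto the poset of monomials 𝓜_{S_{xy}}. -/
open MvPolynomial

set_option synthInstance.maxHeartbeats 1000000
set_option maxHeartbeats 1000000

/-- The ideal `H_x + H_y` of `R_{xy}`: the ideal generated by `H_x ∪ H_y`. -/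
noncomputable def joinIdeal {K : Type*} [Field K] {dx dy : ℕ}
    (Hx : Ideal (MvPolynomial (Fin dx) K)) (Hy : Ideal (MvPolynomial (Fin dy) K)) :
    Ideal (MvPolynomial (Fin dx ⊕ Fin dy) K) :=
  Ideal.map (rename (Sum.inl : Fin dx → Fin dx ⊕ Fin dy)) Hx ⊔
    Ideal.map (rename (Sum.inr : Fin dy → Fin dx ⊕ Fin dy)) Hy


section TensorAux
open TensorProduct
variable {K : Type*} [Field K] {V W : Type*} [AddCommGroup V] [Module K V]
  [AddCommGroup W] [Module K W]
lemma auxExistsDual {v : V} (hv : v ≠ 0) : ∃ f : Module.Dual K V, f v ≠ 0 := by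
  by_contra h; push_neg at h
  exact hv ((Module.forall_dual_apply_eq_zero_iff K v).mp h)

lemma auxTmulNeZero {a : V} {b : W} (ha : a ≠ 0) (hb : b ≠ 0) : a ⊗ₜ[K] b ≠ 0 := by
  obtain ⟨f, hf⟩ := auxExistsDual (K := K) ha
  obtain ⟨g, hg⟩ := auxExistsDual (K := K) hb
  intro h
  have h2 := congrArg (fun z => (TensorProduct.lid K K) (TensorProduct.map f g z)) h
  simp only [TensorProduct.map_tmul, TensorProduct.lid_tmul, smul_eq_mul, map_zero] at h2
  rcases mul_eq_zero.mp h2 with h3 | h3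
  · exact hf h3
  · exact hg h3

lemma auxTmulEq {a c : V} {b d : W} (ha : a ≠ 0) (hb : b ≠ 0)
    (h : a ⊗ₜ[K] b = c ⊗ₜ[K] d) : ∃ l : K, l ≠ 0 ∧ c = l • a ∧ b = l • d := by
  obtain ⟨g, hg⟩ := auxExistsDual (K := K) hb
  have h2 := congrArg (fun z => (TensorProduct.rid K V) ((LinearMap.lTensor V g) z)) h
  simp only [LinearMap.lTensor_tmul, TensorProduct.rid_tmul] at h2
  have hgd : g d ≠ 0 := by
    intro h0
    rw [h0, zero_smul] at h2
    rcases smul_eq_zero.mp h2 with h3 | h3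
    · exact hg h3
    · exact ha h3
  refine ⟨(g d)⁻¹ * g b, by simp [hg, hgd], ?_, ?_⟩
  · rw [mul_smul, h2, inv_smul_smul₀ hgd]
  · have hc : c = ((g d)⁻¹ * g b) • a := by rw [mul_smul, h2, inv_smul_smul₀ hgd]
    have h3 : a ⊗ₜ[K] b = a ⊗ₜ[K] (((g d)⁻¹ * g b) • d) := by
      rw [h, hc, TensorProduct.smul_tmul, TensorProduct.tmul_smul]
    by_contra hne
    have : a ⊗ₜ[K] (b - ((g d)⁻¹ * g b) • d) ≠ 0 :=
      auxTmulNeZero ha (sub_ne_zero.mpr hne)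
    rw [TensorProduct.tmul_sub] at this
    exact this (sub_eq_zero.mpr h3)
end TensorAux

section RigidAux
variable {K : Type*} [Field K] {σ : Type*}
variable [Fintype σ] [DecidableEq σ]
attribute [local instance] MvPolynomial.gradedAlgebra

lemma homogOf (H : Ideal (MvPolynomial σ K)) (h : IsHomogPolyIdeal H) :
    H.IsHomogeneous (homogeneousSubmodule σ K) := by
  obtain ⟨T, rfl, hT⟩ := h
  refine Ideal.homogeneous_span _ _ fun t ht => ?_
  obtain ⟨i, hi⟩ := hT t ht
  exact ⟨i, (mem_homogeneousSubmodule _ _).mpr hi⟩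

lemma monoRigid (H : Ideal (MvPolynomial σ K)) (hx : IsHomogPolyIdeal H)
    (hpairs : ∀ i : ℕ, ∀ m₁ ∈ lvlMono H i, ∀ m₂ ∈ lvlMono H i, m₁ ≠ m₂ →
      LinearIndependent K ![m₁, m₂])
    {m m' : MvPolynomial σ K ⧸ H} (hm : m ∈ monoSet H) (hm' : m' ∈ monoSet H)
    {l : K} (h : m = l • m') : m = m' := by
  obtain ⟨hm0, p, hp⟩ := hm
  obtain ⟨hm0', p', hp'⟩ := hm'
  by_cases hij : (p.sum fun _ e => e) = (p'.sum fun _ e => e)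
  · by_contra hne
    have li := hpairs (p.sum fun _ e => e) m ⟨⟨hm0, p, hp⟩, p, rfl, hp⟩
      m' ⟨⟨hm0', p', hp'⟩, p', hij.symm, hp'⟩ hne
    obtain ⟨h1, _⟩ := LinearIndependent.pair_iff.mp li 1 (-l)
      (by rw [one_smul, neg_smul, h, ← sub_eq_add_neg, sub_self])
    exact one_ne_zero h1
  · exfalso
    have hH := homogOf H hx
    have hsm : (l • monomial p' (1 : K)) = monomial p' l := by
      rw [smul_monomial, smul_eq_mul, mul_one]
    have hms : ∀ u : MvPolynomial σ K,
        Ideal.Quotient.mk H (l • u) = l • Ideal.Quotient.mk H u := fun u =>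
      map_smul (Ideal.Quotient.mkₐ K H) l u
    have hmem : monomial p (1 : K) - monomial p' l ∈ H := by
      rw [← Ideal.Quotient.eq_zero_iff_mem, map_sub, sub_eq_zero, ← hsm, hms, ← hp', ← h, hp]
    have hc := hH (p.sum fun _ e => e) hmem
    have e1 : monomial p (1 : K) ∈ homogeneousSubmodule σ K (p.sum fun _ e => e) :=
      (mem_homogeneousSubmodule _ _).mpr
        (isHomogeneous_monomial _ (by simp [Finsupp.degree, Finsupp.sum]; rfl))
    have e2 : monomial p' l ∈ homogeneousSubmodule σ K (p'.sum fun _ e => e) :=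
      (mem_homogeneousSubmodule _ _).mpr
        (isHomogeneous_monomial _ (by simp [Finsupp.degree, Finsupp.sum]; rfl))
    rw [DirectSum.decompose_sub] at hc
    have hdec : ((DirectSum.decompose (homogeneousSubmodule σ K) (monomial p (1 : K)) -
        DirectSum.decompose (homogeneousSubmodule σ K) (monomial p' l))
          (p.sum fun _ e => e) : MvPolynomial σ K) = monomial p (1 : K) := by
      rw [DirectSum.sub_apply]
      push_cast
      rw [DirectSum.decompose_of_mem_same _ e1,
        DirectSum.decompose_of_mem_ne _ e2 (fun hh => hij (hh.symm ▸ rfl)), sub_zero]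
    rw [hdec] at hc
    exact hm0 (by rw [hp]; exact Ideal.Quotient.eq_zero_iff_mem.mpr hc)
end RigidAux

section AlgMaps
open TensorProduct
variable {K : Type*} [Field K] {dx dy : ℕ}
  (Hx : Ideal (MvPolynomial (Fin dx) K)) (Hy : Ideal (MvPolynomial (Fin dy) K))

noncomputable def jmap : MvPolynomial (Fin dx ⊕ Fin dy) K →ₐ[K]
    (MvPolynomial (Fin dx) K ⧸ Hx) ⊗[K] (MvPolynomial (Fin dy) K ⧸ Hy) :=
  aeval (R := K)
    (S₁ := (MvPolynomial (Fin dx) K ⧸ Hx) ⊗[K] (MvPolynomial (Fin dy) K ⧸ Hy))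
    (Sum.elim (fun i => Ideal.Quotient.mk Hx (X i) ⊗ₜ 1)
    (fun j => 1 ⊗ₜ Ideal.Quotient.mk Hy (X j)))

lemma jmap_comp_inl : (jmap Hx Hy).comp (rename Sum.inl) =
    (Algebra.TensorProduct.includeLeft (R := K) (S := K)).comp (Ideal.Quotient.mkₐ K Hx) := by
  apply algHom_ext; intro i; simp [jmap]

lemma jmap_comp_inr : (jmap Hx Hy).comp (rename Sum.inr) =
    (Algebra.TensorProduct.includeRight (R := K)).comp (Ideal.Quotient.mkₐ K Hy) := by
  apply algHom_ext; intro i; simp [jmap]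

lemma joinIdeal_le_ker : joinIdeal Hx Hy ≤ RingHom.ker (jmap Hx Hy) := by
  apply sup_le
  · rw [Ideal.map_le_iff_le_comap]
    intro a ha
    have := congrArg (fun F => F a) (jmap_comp_inl Hx Hy)
    simp only [AlgHom.comp_apply] at this
    simp only [Ideal.mem_comap, RingHom.mem_ker]
    rw [this]
    simp [Ideal.Quotient.eq_zero_iff_mem.mpr ha]
  · rw [Ideal.map_le_iff_le_comap]
    intro a ha
    have := congrArg (fun F => F a) (jmap_comp_inr Hx Hy)
    simp only [AlgHom.comp_apply] at this
    simp only [Ideal.mem_comap, RingHom.mem_ker]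
    rw [this]
    simp [Ideal.Quotient.eq_zero_iff_mem.mpr ha]

noncomputable def PhiMap : (MvPolynomial (Fin dx ⊕ Fin dy) K ⧸ joinIdeal Hx Hy) →ₐ[K]
    (MvPolynomial (Fin dx) K ⧸ Hx) ⊗[K] (MvPolynomial (Fin dy) K ⧸ Hy) :=
  Ideal.Quotient.liftₐ _ (jmap Hx Hy) (fun a ha => joinIdeal_le_ker Hx Hy ha)

noncomputable def ixMap : (MvPolynomial (Fin dx) K ⧸ Hx) →ₐ[K]
    (MvPolynomial (Fin dx ⊕ Fin dy) K ⧸ joinIdeal Hx Hy) :=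
  Ideal.Quotient.liftₐ _ ((Ideal.Quotient.mkₐ K (joinIdeal Hx Hy)).comp (rename Sum.inl))
    (fun a ha => by
      simp only [AlgHom.comp_apply, Ideal.Quotient.mkₐ_eq_mk]
      rw [Ideal.Quotient.eq_zero_iff_mem]
      exact Ideal.mem_sup_left (Ideal.mem_map_of_mem _ ha))

noncomputable def iyMap : (MvPolynomial (Fin dy) K ⧸ Hy) →ₐ[K]
    (MvPolynomial (Fin dx ⊕ Fin dy) K ⧸ joinIdeal Hx Hy) :=
  Ideal.Quotient.liftₐ _ ((Ideal.Quotient.mkₐ K (joinIdeal Hx Hy)).comp (rename Sum.inr))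
    (fun a ha => by
      simp only [AlgHom.comp_apply, Ideal.Quotient.mkₐ_eq_mk]
      rw [Ideal.Quotient.eq_zero_iff_mem]
      exact Ideal.mem_sup_right (Ideal.mem_map_of_mem _ ha))

lemma ixMap_mk (u : MvPolynomial (Fin dx) K) :
    ixMap Hx Hy (Ideal.Quotient.mk Hx u) =
      Ideal.Quotient.mk (joinIdeal Hx Hy) (rename Sum.inl u) := by
  simp [ixMap, Ideal.Quotient.liftₐ_apply, Ideal.Quotient.lift_mk]
  exact Ideal.Quotient.lift_mk _ _ _

lemma iyMap_mk (v : MvPolynomial (Fin dy) K) :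
    iyMap Hx Hy (Ideal.Quotient.mk Hy v) =
      Ideal.Quotient.mk (joinIdeal Hx Hy) (rename Sum.inr v) := by
  simp [iyMap, Ideal.Quotient.liftₐ_apply, Ideal.Quotient.lift_mk]
  exact Ideal.Quotient.lift_mk _ _ _

noncomputable def PsiMap : (MvPolynomial (Fin dx) K ⧸ Hx) ⊗[K] (MvPolynomial (Fin dy) K ⧸ Hy)
    →ₐ[K] (MvPolynomial (Fin dx ⊕ Fin dy) K ⧸ joinIdeal Hx Hy) :=
  Algebra.TensorProduct.lift (ixMap Hx Hy) (iyMap Hx Hy) (fun _ _ => Commute.all _ _)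

lemma PhiMap_mk (u : MvPolynomial (Fin dx) K) (v : MvPolynomial (Fin dy) K) :
    PhiMap Hx Hy (Ideal.Quotient.mk (joinIdeal Hx Hy) (rename Sum.inl u * rename Sum.inr v)) =
      Ideal.Quotient.mk Hx u ⊗ₜ[K] Ideal.Quotient.mk Hy v := by
  have h1 := congrArg (fun F => F u) (jmap_comp_inl Hx Hy)
  have h2 := congrArg (fun F => F v) (jmap_comp_inr Hx Hy)
  simp only [AlgHom.comp_apply, Ideal.Quotient.mkₐ_eq_mk] at h1 h2
  simp only [PhiMap, Ideal.Quotient.liftₐ_apply, Ideal.Quotient.lift_mk, map_mul, h1, h2]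
  erw [h1, h2]
  simp [Algebra.TensorProduct.includeLeft_apply, Algebra.TensorProduct.includeRight_apply,
    Algebra.TensorProduct.tmul_mul_tmul]

lemma PsiMap_PhiMap (q : MvPolynomial (Fin dx ⊕ Fin dy) K ⧸ joinIdeal Hx Hy) :
    PsiMap Hx Hy (PhiMap Hx Hy q) = q := by
  obtain ⟨x, rfl⟩ := Ideal.Quotient.mk_surjective q
  have : (PsiMap Hx Hy).comp ((PhiMap Hx Hy).comp (Ideal.Quotient.mkₐ K (joinIdeal Hx Hy))) =
      Ideal.Quotient.mkₐ K (joinIdeal Hx Hy) := by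
    apply algHom_ext
    rintro (i | j) <;>
      simp [PhiMap, PsiMap, jmap, ixMap_mk, iyMap_mk, Ideal.Quotient.liftₐ_apply,
        Algebra.TensorProduct.lift_tmul] <;>
      erw [Ideal.Quotient.lift_mk] <;>
      simp [jmap, ixMap_mk, iyMap_mk, Algebra.TensorProduct.lift_tmul]
  have := congrArg (fun F => F x) this
  simpa using this

lemma PhiMap_inj : Function.Injective (PhiMap Hx Hy) := by
  intro u v h
  have := congrArg (PsiMap Hx Hy) h
  rwa [PsiMap_PhiMap, PsiMap_PhiMap] at this

end AlgMaps



section MainAux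
open TensorProduct
variable {K : Type*} [Field K] {dx dy : ℕ}
  (Hx : Ideal (MvPolynomial (Fin dx) K)) (Hy : Ideal (MvPolynomial (Fin dy) K))

lemma ix_iy_mul (u : MvPolynomial (Fin dx) K) (v : MvPolynomial (Fin dy) K) :
    ixMap Hx Hy (Ideal.Quotient.mk Hx u) * iyMap Hx Hy (Ideal.Quotient.mk Hy v) =
      Ideal.Quotient.mk (joinIdeal Hx Hy) (rename Sum.inl u * rename Sum.inr v) := by
  rw [ixMap_mk, iyMap_mk, map_mul]

lemma PhiMap_ix (a : MvPolynomial (Fin dx) K ⧸ Hx) :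
    PhiMap Hx Hy (ixMap Hx Hy a) = a ⊗ₜ[K] 1 := by
  obtain ⟨u, rfl⟩ := Ideal.Quotient.mk_surjective a
  rw [ixMap_mk]
  have h1 := congrArg (fun F => F u) (jmap_comp_inl Hx Hy)
  simp only [AlgHom.comp_apply, Ideal.Quotient.mkₐ_eq_mk] at h1
  simp only [PhiMap, Ideal.Quotient.liftₐ_apply, Ideal.Quotient.lift_mk]
  erw [h1]
  rfl

lemma PhiMap_iy (b : MvPolynomial (Fin dy) K ⧸ Hy) :
    PhiMap Hx Hy (iyMap Hx Hy b) = 1 ⊗ₜ[K] b := by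
  obtain ⟨v, rfl⟩ := Ideal.Quotient.mk_surjective b
  rw [iyMap_mk]
  have h1 := congrArg (fun F => F v) (jmap_comp_inr Hx Hy)
  simp only [AlgHom.comp_apply, Ideal.Quotient.mkₐ_eq_mk] at h1
  simp only [PhiMap, Ideal.Quotient.liftₐ_apply, Ideal.Quotient.lift_mk]
  erw [h1]
  rfl

lemma PhiAB (a : MvPolynomial (Fin dx) K ⧸ Hx) (b : MvPolynomial (Fin dy) K ⧸ Hy) :
    PhiMap Hx Hy (ixMap Hx Hy a * iyMap Hx Hy b) = a ⊗ₜ[K] b := by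
  rw [map_mul, PhiMap_ix, PhiMap_iy, Algebra.TensorProduct.tmul_mul_tmul, one_mul, mul_one]

lemma monoSplit (P : Fin dx ⊕ Fin dy →₀ ℕ) :
    ∃ (p : Fin dx →₀ ℕ) (q : Fin dy →₀ ℕ),
      monomial P (1 : K) =
        rename Sum.inl (monomial p (1 : K)) * rename Sum.inr (monomial q (1 : K)) := by
  refine ⟨P.comapDomain Sum.inl Sum.inl_injective.injOn,
    P.comapDomain Sum.inr Sum.inr_injective.injOn, ?_⟩
  rw [rename_monomial, rename_monomial, monomial_mul, mul_one]
  have hP : Finsupp.mapDomain Sum.inl (P.comapDomain Sum.inl Sum.inl_injective.injOn) +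
      Finsupp.mapDomain Sum.inr (P.comapDomain Sum.inr Sum.inr_injective.injOn) = P := by
    ext s
    rcases s with i | j
    · rw [Finsupp.add_apply, Finsupp.mapDomain_apply Sum.inl_injective,
        Finsupp.mapDomain_notin_range _ _ (by simp), Finsupp.comapDomain_apply, add_zero]
    · rw [Finsupp.add_apply, Finsupp.mapDomain_notin_range _ _ (by simp),
        Finsupp.mapDomain_apply Sum.inr_injective, Finsupp.comapDomain_apply, zero_add]
  rw [hP]

lemma monoMulMem {a : MvPolynomial (Fin dx) K ⧸ Hx} {b : MvPolynomial (Fin dy) K ⧸ Hy}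
    (ha : a ∈ monoSet Hx) (hb : b ∈ monoSet Hy) :
    ixMap Hx Hy a * iyMap Hx Hy b ∈ monoSet (joinIdeal Hx Hy) := by
  obtain ⟨ha0, p, rfl⟩ := ha
  obtain ⟨hb0, q, rfl⟩ := hb
  constructor
  · intro h0
    have h1 := PhiAB Hx Hy (Ideal.Quotient.mk Hx (monomial p 1))
      (Ideal.Quotient.mk Hy (monomial q 1))
    rw [h0, map_zero] at h1
    exact auxTmulNeZero ha0 hb0 h1.symm
  · exact ⟨p.mapDomain Sum.inl + q.mapDomain Sum.inr, by
      rw [ix_iy_mul, rename_monomial, rename_monomial, monomial_mul, mul_one]⟩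

end MainAux

/-- If every pair of distinct monomials of the same degree in `S_x` is
`K`-linearly independent, then `(m_x + H_x, m_y + H_y) ↦ m_x m_y + (H_x + H_y)` is a
well-defined poset isomorphism `𝓜_{S_x} × 𝓜_{S_y} ≅ 𝓜_{S_{xy}}`. -/
theorem monoPoset_product_iso
    {K : Type*} [Field K] {dx dy : ℕ}
    (Hx : Ideal (MvPolynomial (Fin dx) K)) (Hy : Ideal (MvPolynomial (Fin dy) K))
    (hx : IsHomogPolyIdeal Hx) (hy : IsHomogPolyIdeal Hy)
    (hxT : Hx ≠ ⊤) (hyT : Hy ≠ ⊤)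
    (hpairs : ∀ i : ℕ, ∀ m₁ ∈ lvlMono Hx i, ∀ m₂ ∈ lvlMono Hx i, m₁ ≠ m₂ →
      LinearIndependent K ![m₁, m₂]) :
    ∃ φ : {m : MvPolynomial (Fin dx) K ⧸ Hx // m ∈ monoSet Hx} ×
          {m : MvPolynomial (Fin dy) K ⧸ Hy // m ∈ monoSet Hy} →
        {m : MvPolynomial (Fin dx ⊕ Fin dy) K ⧸ joinIdeal Hx Hy //
          m ∈ monoSet (joinIdeal Hx Hy)},
      Function.Bijective φ ∧
      (∀ (px : Fin dx →₀ ℕ) (py : Fin dy →₀ ℕ)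
        (hpx : Ideal.Quotient.mk Hx (monomial px (1 : K)) ∈ monoSet Hx)
        (hpy : Ideal.Quotient.mk Hy (monomial py (1 : K)) ∈ monoSet Hy),
        (φ (⟨Ideal.Quotient.mk Hx (monomial px (1 : K)), hpx⟩,
            ⟨Ideal.Quotient.mk Hy (monomial py (1 : K)), hpy⟩) :
          MvPolynomial (Fin dx ⊕ Fin dy) K ⧸ joinIdeal Hx Hy) =
          Ideal.Quotient.mk (joinIdeal Hx Hy)
            (rename Sum.inl (monomial px (1 : K)) * rename Sum.inr (monomial py (1 : K)))) ∧
      (∀ a b : {m : MvPolynomial (Fin dx) K ⧸ Hx // m ∈ monoSet Hx} ×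
          {m : MvPolynomial (Fin dy) K ⧸ Hy // m ∈ monoSet Hy},
        (mdvd Hx ↑a.1 ↑b.1 ∧ mdvd Hy ↑a.2 ↑b.2) ↔
          mdvd (joinIdeal Hx Hy) ↑(φ a) ↑(φ b)) := by
  classical
  refine ⟨fun ab => ⟨ixMap Hx Hy ab.1.1 * iyMap Hx Hy ab.2.1,
      monoMulMem Hx Hy ab.1.2 ab.2.2⟩, ⟨?_, ?_⟩, ?_, ?_⟩
  · -- injective
    rintro ⟨⟨a, ha⟩, ⟨b, hb⟩⟩ ⟨⟨a', ha'⟩, ⟨b', hb'⟩⟩ h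
    have hval : ixMap Hx Hy a * iyMap Hx Hy b = ixMap Hx Hy a' * iyMap Hx Hy b' :=
      congrArg Subtype.val h
    have htens : a ⊗ₜ[K] b = a' ⊗ₜ[K] b' := by
      rw [← PhiAB, ← PhiAB, hval]
    obtain ⟨l, hl0, hc, hd⟩ := auxTmulEq ha.1 hb.1 htens
    have haa : a' = a := monoRigid Hx hx hpairs ha' ha hc
    have hl1 : l = 1 := by
      have h1 : (1 - l) • a = 0 := by
        rw [sub_smul, one_smul, sub_eq_zero]
        rw [haa] at hc
        exact hc
      rcases smul_eq_zero.mp h1 with h2 | h2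
      · exact (sub_eq_zero.mp h2).symm
      · exact absurd h2 ha.1
    have hbb : b = b' := by rw [hd, hl1, one_smul]
    simp only [Prod.mk.injEq, Subtype.mk.injEq]
    exact ⟨haa.symm, hbb⟩
  · -- surjective
    rintro ⟨m, hm⟩
    obtain ⟨hm0, P, hP⟩ := id hm
    obtain ⟨p, q, hsplit⟩ := monoSplit (K := K) P
    have hv : ixMap Hx Hy (Ideal.Quotient.mk Hx (monomial p 1)) *
        iyMap Hx Hy (Ideal.Quotient.mk Hy (monomial q 1)) = m := by
      rw [ix_iy_mul, ← hsplit, ← hP]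
    have ha0 : Ideal.Quotient.mk Hx (monomial p (1 : K)) ≠ 0 := by
      intro h0; rw [h0, map_zero, zero_mul] at hv; exact hm0 hv.symm
    have hb0 : Ideal.Quotient.mk Hy (monomial q (1 : K)) ≠ 0 := by
      intro h0; rw [h0, map_zero, mul_zero] at hv; exact hm0 hv.symm
    exact ⟨(⟨_, ⟨ha0, p, rfl⟩⟩, ⟨_, ⟨hb0, q, rfl⟩⟩), Subtype.ext hv⟩
  · -- product formula
    intro px py hpx hpy
    exact ix_iy_mul Hx Hy (monomial px 1) (monomial py 1)
  · -- mdvd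
    intro a b
    constructor
    · rintro ⟨⟨cx, hcx, hbx⟩, ⟨cy, hcy, hby⟩⟩
      refine ⟨ixMap Hx Hy cx * iyMap Hx Hy cy, monoMulMem Hx Hy hcx hcy, ?_⟩
      show ixMap Hx Hy ↑b.1 * iyMap Hx Hy ↑b.2 =
        _ * (ixMap Hx Hy ↑a.1 * iyMap Hx Hy ↑a.2)
      rw [hbx, hby, map_mul, map_mul]
      ring
    · rintro ⟨c, ⟨hc0, P, rfl⟩, hbc⟩
      obtain ⟨p, q, hsplit⟩ := monoSplit (K := K) P
      have hcv : ixMap Hx Hy (Ideal.Quotient.mk Hx (monomial p 1)) *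
          iyMap Hx Hy (Ideal.Quotient.mk Hy (monomial q 1)) =
            Ideal.Quotient.mk (joinIdeal Hx Hy) (monomial P 1) := by
        rw [ix_iy_mul, ← hsplit]
      have hcx0 : Ideal.Quotient.mk Hx (monomial p (1 : K)) ≠ 0 := by
        intro h0; rw [h0, map_zero, zero_mul] at hcv; exact hc0 hcv.symm
      have hcy0 : Ideal.Quotient.mk Hy (monomial q (1 : K)) ≠ 0 := by
        intro h0; rw [h0, map_zero, mul_zero] at hcv; exact hc0 hcv.symm
      rw [← hcv] at hbc
      have heq : ixMap Hx Hy ↑b.1 * iyMap Hx Hy ↑b.2 =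
          ixMap Hx Hy (Ideal.Quotient.mk Hx (monomial p 1) * ↑a.1) *
            iyMap Hx Hy (Ideal.Quotient.mk Hy (monomial q 1) * ↑a.2) := by
        rw [map_mul, map_mul]
        calc ixMap Hx Hy ↑b.1 * iyMap Hx Hy ↑b.2
            = (ixMap Hx Hy (Ideal.Quotient.mk Hx (monomial p 1)) *
                iyMap Hx Hy (Ideal.Quotient.mk Hy (monomial q 1))) *
              (ixMap Hx Hy ↑a.1 * iyMap Hx Hy ↑a.2) := hbc
          _ = _ := by ring
      have htens : (↑b.1 : MvPolynomial (Fin dx) K ⧸ Hx) ⊗ₜ[K] (↑b.2 : MvPolynomial (Fin dy) K ⧸ Hy) =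
          (Ideal.Quotient.mk Hx (monomial p 1) * ↑a.1) ⊗ₜ[K]
            (Ideal.Quotient.mk Hy (monomial q 1) * ↑a.2) := by
        rw [← PhiAB, ← PhiAB, heq]
      obtain ⟨l, hl0, hcc, hdd⟩ := auxTmulEq b.1.2.1 b.2.2.1 htens
      obtain ⟨ha10, pa, hpa⟩ := id a.1.2
      have hmem : Ideal.Quotient.mk Hx (monomial p 1) * (↑a.1 : MvPolynomial (Fin dx) K ⧸ Hx) ∈
          monoSet Hx := by
        refine ⟨?_, p + pa, ?_⟩
        · rw [hcc]
          exact smul_ne_zero hl0 b.1.2.1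
        · rw [hpa, ← map_mul, monomial_mul, one_mul]
      have hrig : Ideal.Quotient.mk Hx (monomial p 1) * (↑a.1 : MvPolynomial (Fin dx) K ⧸ Hx) =
          ↑b.1 := monoRigid Hx hx hpairs hmem b.1.2 hcc
      have hl1 : l = 1 := by
        have h1 : (1 - l) • (↑b.1 : MvPolynomial (Fin dx) K ⧸ Hx) = 0 := by
          rw [sub_smul, one_smul, sub_eq_zero]
          rw [hrig] at hcc
          exact hcc
        rcases smul_eq_zero.mp h1 with h2 | h2
        · exact (sub_eq_zero.mp h2).symm
        · exact absurd h2 b.1.2.1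
      refine ⟨⟨Ideal.Quotient.mk Hx (monomial p 1), ⟨hcx0, p, rfl⟩, hrig.symm⟩,
        ⟨Ideal.Quotient.mk Hy (monomial q 1), ⟨hcy0, q, rfl⟩, ?_⟩⟩
      rw [hdd, hl1, one_smul]
end
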